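/- arXiv:1805.02455 — 13 statements merged into one kernel-verified Lean document; each statement's English description precedes it below -/
import Mathlib

section
/- Let R be a quadratic form on ℝ^d and L : ℝ^d → ℝ^k a linear map. Then there exists D > 0 such that the quadratic form x ↦ R(x) + D·|Lx|² is positive definite if and only if the restriction of R to ker L is positive definite. -/
/-!
The sets `{u | 0 < R u + (n + 1) * ‖L u‖ ^ 2}` are open and increase with `n`. They cover the
unit sphere: on `ker L` by hypothesis, and off `ker L` once `n` is large. By compactness one of
them contains the whole sphere, and both terms are homogeneous of degree two, so positivity on
the sphere gives positivity on all nonzero vectors.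
-/

open Metric

theorem QuadraticMap.continuous_of_finiteDimensional {E : Type*} [NormedAddCommGroup E]
    [NormedSpace ℝ E] [FiniteDimensional ℝ E] (Q : QuadraticForm ℝ E) : Continuous Q := by
  have hB := (QuadraticMap.associated (R := ℝ) Q).toContinuousBilinearMap.continuous₂.comp
    (continuous_id.prodMk continuous_id)
  simpa [Function.comp_def, QuadraticMap.associated_eq_self_apply] using hB

section

variable {E F : Type*} [NormedAddCommGroup E] [NormedSpace ℝ E]
  [NormedAddCommGroup F] [NormedSpace ℝ F]

theorem add_mul_norm_sq_map_smul (R : QuadraticForm ℝ E) (L : E →ₗ[ℝ] F) (D c : ℝ) (x : E) :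
    R (c • x) + D * ‖L (c • x)‖ ^ 2 = c ^ 2 * (R x + D * ‖L x‖ ^ 2) := by
  rw [QuadraticMap.map_smul, map_smul, norm_smul, Real.norm_eq_abs, mul_pow, sq_abs, smul_eq_mul]
  ring

theorem add_mul_norm_sq_pos_of_pos_on_sphere (R : QuadraticForm ℝ E) (L : E →ₗ[ℝ] F) (D : ℝ)
    (h : ∀ u ∈ sphere (0 : E) 1, 0 < R u + D * ‖L u‖ ^ 2) {x : E} (hx : x ≠ 0) :
    0 < R x + D * ‖L x‖ ^ 2 := by
  have hx' : 0 < ‖x‖ := norm_pos_iff.mpr hx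
  have hu : ‖x‖⁻¹ • x ∈ sphere (0 : E) 1 := by simp [norm_smul, hx'.ne']
  have hx_eq := add_mul_norm_sq_map_smul R L D ‖x‖ (‖x‖⁻¹ • x)
  rw [smul_inv_smul₀ hx'.ne'] at hx_eq
  rw [hx_eq]
  exact mul_pos (by positivity) (h _ hu)

theorem exists_add_mul_norm_sq_pos_on_sphere [FiniteDimensional ℝ E] (R : QuadraticForm ℝ E)
    (L : E →ₗ[ℝ] F) (h : ∀ x ∈ LinearMap.ker L, x ≠ 0 → 0 < R x) :
    ∃ D : ℝ, 0 < D ∧ ∀ u ∈ sphere (0 : E) 1, 0 < R u + D * ‖L u‖ ^ 2 := by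
  have hR := R.continuous_of_finiteDimensional
  have hL := L.continuous_of_finiteDimensional
  let U : ℕ → Set E := fun n => {u | 0 < R u + (n + 1) * ‖L u‖ ^ 2}
  have hU_open (n : ℕ) : IsOpen (U n) :=
    isOpen_lt continuous_const (hR.add (continuous_const.mul (hL.norm.pow 2)))
  have hU_mono : Monotone U := by
    intro m n hmn u hu
    simp only [U, Set.mem_ofPred_eq] at hu ⊢
    have : ((m : ℝ) + 1) * ‖L u‖ ^ 2 ≤ (n + 1) * ‖L u‖ ^ 2 := by gcongr
    linarith
  have hU_cover : sphere (0 : E) 1 ⊆ ⋃ n, U n := by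
    intro u hu
    simp only [U, Set.mem_iUnion, Set.mem_ofPred_eq]
    by_cases hLu : L u = 0
    · exact ⟨0, by simpa [hLu] using h u hLu (ne_zero_of_mem_unit_sphere ⟨u, hu⟩)⟩
    · have hLu_pos : 0 < ‖L u‖ ^ 2 := by positivity
      obtain ⟨n, hn⟩ := exists_nat_gt (-R u / ‖L u‖ ^ 2)
      rw [div_lt_iff₀ hLu_pos] at hn
      exact ⟨n, by nlinarith⟩
  obtain ⟨n, hn⟩ := (isCompact_sphere 0 1).elim_directed_cover U hU_open hU_cover
    hU_mono.directed_le
  exact ⟨n + 1, by positivity, hn⟩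

end

theorem stmt2 {d k : ℕ} (R : QuadraticForm ℝ (EuclideanSpace ℝ (Fin d)))
    (L : EuclideanSpace ℝ (Fin d) →ₗ[ℝ] EuclideanSpace ℝ (Fin k)) :
    (∃ D : ℝ, 0 < D ∧ ∀ x, x ≠ 0 → 0 < R x + D * ‖L x‖ ^ 2) ↔
      (∀ x ∈ LinearMap.ker L, x ≠ 0 → 0 < R x) := by
  constructor
  · rintro ⟨D, -, hD⟩ x hx hx0
    simpa [LinearMap.mem_ker.mp hx] using hD x hx0
  · intro h
    obtain ⟨D, hD, hsphere⟩ := exists_add_mul_norm_sq_pos_on_sphere R L h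
    exact ⟨D, hD, fun x hx => add_mul_norm_sq_pos_of_pos_on_sphere R L D hsphere hx⟩
end

section
/- Let S : X → Y and T : X → Z be linear maps between finite-dimensional real vector spaces with ker S ⊆ ker T, and let F ⊆ Y be compact. Then T(S⁻¹(F)) is a compact subset of Z. -/
/-!
Since `ker S ≤ ker T`, `T` factors as `A ∘ S` with `A` linear, so `T(S⁻¹(F)) = A(F ∩ range S)`:
the continuous image of a compact set, as `range S` is a closed subspace.
-/

open Set

theorem LinearMap.exists_comp_eq_of_ker_le {K V W U : Type*} [DivisionRing K]
    [AddCommGroup V] [Module K V] [AddCommGroup W] [Module K W] [AddCommGroup U] [Module K U]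
    (S : V →ₗ[K] W) (T : V →ₗ[K] U) (h : ker S ≤ ker T) : ∃ A : W →ₗ[K] U, A ∘ₗ S = T := by
  obtain ⟨B, hB⟩ := ((ker S).liftQ S le_rfl).exists_leftInverse_of_injective
    (Submodule.ker_liftQ_eq_bot _ _ _ le_rfl)
  refine ⟨(ker S).liftQ T h ∘ₗ B, LinearMap.ext fun x => ?_⟩
  have hBS : B (S x) = (ker S).mkQ x := LinearMap.congr_fun hB ((ker S).mkQ x)
  simp [hBS]

theorem IsCompact.image_comp_preimage {α β γ : Type*} [TopologicalSpace β] [TopologicalSpace γ]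
    {S : α → β} {A : β → γ} (hA : Continuous A) (hS : IsClosed (range S)) {F : Set β}
    (hF : IsCompact F) : IsCompact ((A ∘ S) '' (S ⁻¹' F)) := by
  rw [image_comp, image_preimage_eq_inter_range]
  exact (hF.inter_right hS).image hA

theorem stmt4_general {X Y Z : Type*} [NormedAddCommGroup X] [NormedSpace ℝ X]
    [NormedAddCommGroup Y] [NormedSpace ℝ Y] [FiniteDimensional ℝ Y]
    [NormedAddCommGroup Z] [NormedSpace ℝ Z]
    (S : X →ₗ[ℝ] Y) (T : X →ₗ[ℝ] Z) (h : LinearMap.ker S ≤ LinearMap.ker T)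
    (F : Set Y) (hF : IsCompact F) : IsCompact (T '' (S ⁻¹' F)) := by
  obtain ⟨A, rfl⟩ := S.exists_comp_eq_of_ker_le T h
  have hS : IsClosed (range S) := LinearMap.coe_range S ▸ S.range.closed_of_finiteDimensional
  exact hF.image_comp_preimage A.continuous_of_finiteDimensional hS

theorem stmt4 {X Y Z : Type*} [NormedAddCommGroup X] [NormedSpace ℝ X] [FiniteDimensional ℝ X]
    [NormedAddCommGroup Y] [NormedSpace ℝ Y] [FiniteDimensional ℝ Y]
    [NormedAddCommGroup Z] [NormedSpace ℝ Z] [FiniteDimensional ℝ Z]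
    (S : X →ₗ[ℝ] Y) (T : X →ₗ[ℝ] Z) (h : LinearMap.ker S ≤ LinearMap.ker T)
    (F : Set Y) (hF : IsCompact F) : IsCompact (T '' (S ⁻¹' F)) :=
  stmt4_general S T h F hF
end

section
/- Let I be a finite index set, and for each i ∈ I let d_i > 0, L_i : H → H_i a surjective linear map between Euclidean spaces, and K_i : H_i → H_i a symmetric positive definite map. Assume K := ∑_i d_i L_i* K_i L_i is positive definite. Then for any w ∈ H and any y_i ∈ H_i satisfying w = ∑_i d_i L_i* y_i, one has ⟨K⁻¹w, w⟩ ≤ ∑_i d_i ⟨K_i⁻¹ y_i, y_i⟩, with equality when y_i = K_i L_i K⁻¹ w. -/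
/-!
With `u i := L i (K⁻¹ w)`, the left-hand side is computed in two ways: pairing with
`w = ∑ dᵢ Lᵢ* yᵢ` gives `∑ dᵢ ⟪uᵢ, yᵢ⟫`, and pairing with `w = K (K⁻¹ w)` gives
`∑ dᵢ ⟪Kᵢ uᵢ, uᵢ⟫`. Hence `⟪K⁻¹ w, w⟫ = ∑ dᵢ (2 ⟪uᵢ, yᵢ⟫ - ⟪Kᵢ uᵢ, uᵢ⟫)`, and each term is at most
`⟪Kᵢ⁻¹ yᵢ, yᵢ⟫` because the difference is `⟪Kᵢ (Kᵢ⁻¹ yᵢ - uᵢ), Kᵢ⁻¹ yᵢ - uᵢ⟫ ≥ 0`.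
-/

open scoped BigOperators InnerProductSpace

namespace LinearMap

section SingleSpace

variable {E : Type*} [NormedAddCommGroup E] [InnerProductSpace ℝ E] {K : E →ₗ[ℝ] E}

theorem IsSymmetric.inner_map_sub_sub (hK : K.IsSymmetric) {y z : E} (hz : K z = y) (u : E) :
    ⟪K (z - u), z - u⟫_ℝ = ⟪z, y⟫_ℝ - (2 * ⟪u, y⟫_ℝ - ⟪K u, u⟫_ℝ) := by
  have hzu : ⟪K u, z⟫_ℝ = ⟪u, y⟫_ℝ := by rw [hK, hz]
  rw [map_sub, hz, inner_sub_left, inner_sub_right, inner_sub_right, hzu,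
    real_inner_comm z y, real_inner_comm u y]
  ring

theorem IsPositive.two_inner_sub_inner_map_le (hK : K.IsPositive) {y z : E} (hz : K z = y)
    (u : E) : 2 * ⟪u, y⟫_ℝ - ⟪K u, u⟫_ℝ ≤ ⟪z, y⟫_ℝ := by
  have := hK.inner_nonneg_left (z - u)
  rw [hK.isSymmetric.inner_map_sub_sub hz] at this
  linarith

theorem IsSymmetric.inner_eq_of_map_eq (hK : K.IsSymmetric) {y z u : E} (hz : K z = y)
    (hu : K u = y) : ⟪z, y⟫_ℝ = ⟪u, y⟫_ℝ := by
  rw [← hu, ← hK z u, hz, hu, real_inner_comm]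

end SingleSpace

section WeightedSum

variable {ι : Type*} {H : Type*} [NormedAddCommGroup H] [InnerProductSpace ℝ H]
    [FiniteDimensional ℝ H] {Hi : ι → Type*} [∀ i, NormedAddCommGroup (Hi i)]
    [∀ i, InnerProductSpace ℝ (Hi i)] [∀ i, FiniteDimensional ℝ (Hi i)]
    (s : Finset ι) (d : ι → ℝ) (L : ∀ i, H →ₗ[ℝ] Hi i)

theorem inner_sum_smul_adjoint_apply (x : H) (y : ∀ i, Hi i) :
    ⟪x, ∑ i ∈ s, d i • adjoint (L i) (y i)⟫_ℝ = ∑ i ∈ s, d i * ⟪L i x, y i⟫_ℝ := by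
  simp only [inner_sum, real_inner_smul_right, adjoint_inner_right]

theorem inner_sum_smul_adjoint_comp_comp_apply (K : ∀ i, Hi i →ₗ[ℝ] Hi i) (x : H) :
    ⟪(∑ i ∈ s, d i • (adjoint (L i) ∘ₗ K i ∘ₗ L i)) x, x⟫_ℝ
      = ∑ i ∈ s, d i * ⟪K i (L i x), L i x⟫_ℝ := by
  rw [real_inner_comm, sum_apply]
  simp only [smul_apply, comp_apply, inner_sum_smul_adjoint_apply, real_inner_comm (L _ x)]

end WeightedSum

end LinearMap

open LinearMap in
theorem stmt5_general {ι : Type*} [Fintype ι] {H : Type*} [NormedAddCommGroup H]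
    [InnerProductSpace ℝ H] [FiniteDimensional ℝ H]
    {Hi : ι → Type*} [∀ i, NormedAddCommGroup (Hi i)]
    [∀ i, InnerProductSpace ℝ (Hi i)] [∀ i, FiniteDimensional ℝ (Hi i)]
    (d : ι → ℝ) (hd : ∀ i, 0 < d i)
    (L : ∀ i, H →ₗ[ℝ] Hi i)
    (K : ∀ i, Hi i →ₗ[ℝ] Hi i)
    (hKsymm : ∀ i, ∀ x y : Hi i, (inner ℝ ((K i) x) y : ℝ) = inner ℝ x ((K i) y))
    (hKpos : ∀ i, ∀ x : Hi i, x ≠ 0 → 0 < (inner ℝ ((K i) x) x : ℝ))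
    (Ksum : H →ₗ[ℝ] H)
    (hKsum : Ksum = ∑ i, d i • (LinearMap.adjoint (L i) ∘ₗ K i ∘ₗ L i))
    (w w' : H) (hw : Ksum w' = w)
    (y : ∀ i, Hi i) (z : ∀ i, Hi i) (hz : ∀ i, (K i) (z i) = y i)
    (hrep : w = ∑ i, d i • (LinearMap.adjoint (L i)) (y i)) :
    (inner ℝ w' w : ℝ) ≤ ∑ i, d i * (inner ℝ (z i) (y i) : ℝ) ∧
      ((∀ i, y i = (K i) ((L i) w')) →
        (inner ℝ w' w : ℝ) = ∑ i, d i * (inner ℝ (z i) (y i) : ℝ)) := by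
  have hK : ∀ i, (K i).IsPositive := fun i => (K i).isPositive_iff.2
    ⟨hKsymm i, fun x => (eq_or_ne x 0).elim (fun hx => by simp [hx]) fun hx => (hKpos i x hx).le⟩
  have hw_y : ⟪w', w⟫_ℝ = ∑ i, d i * ⟪L i w', y i⟫_ℝ := by
    rw [hrep, inner_sum_smul_adjoint_apply]
  have hw_K : ⟪w', w⟫_ℝ = ∑ i, d i * ⟪K i (L i w'), L i w'⟫_ℝ := by
    rw [← hw, real_inner_comm, hKsum, inner_sum_smul_adjoint_comp_comp_apply]
  refine ⟨?_, fun hy => ?_⟩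
  · calc ⟪w', w⟫_ℝ = ∑ i, d i * (2 * ⟪L i w', y i⟫_ℝ - ⟪K i (L i w'), L i w'⟫_ℝ) := by
          simp only [mul_sub, Finset.sum_sub_distrib, mul_left_comm _ (2 : ℝ), ← Finset.mul_sum]
          linarith
      _ ≤ ∑ i, d i * ⟪z i, y i⟫_ℝ := Finset.sum_le_sum fun i _ =>
          mul_le_mul_of_nonneg_left ((hK i).two_inner_sub_inner_map_le (hz i) _) (hd i).le
  · rw [hw_y]
    exact Finset.sum_congr rfl fun i _ => by
      rw [(hK i).isSymmetric.inner_eq_of_map_eq (hz i) (hy i).symm]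

theorem stmt5 {ι : Type*} [Fintype ι] {H : Type*} [NormedAddCommGroup H]
    [InnerProductSpace ℝ H] [FiniteDimensional ℝ H]
    {Hi : ι → Type*} [∀ i, NormedAddCommGroup (Hi i)]
    [∀ i, InnerProductSpace ℝ (Hi i)] [∀ i, FiniteDimensional ℝ (Hi i)]
    (d : ι → ℝ) (hd : ∀ i, 0 < d i)
    (L : ∀ i, H →ₗ[ℝ] Hi i) (hL : ∀ i, Function.Surjective (L i))
    (K : ∀ i, Hi i →ₗ[ℝ] Hi i)
    (hKsymm : ∀ i, ∀ x y : Hi i, (inner ℝ ((K i) x) y : ℝ) = inner ℝ x ((K i) y))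
    (hKpos : ∀ i, ∀ x : Hi i, x ≠ 0 → 0 < (inner ℝ ((K i) x) x : ℝ))
    (Ksum : H →ₗ[ℝ] H)
    (hKsum : Ksum = ∑ i, d i • (LinearMap.adjoint (L i) ∘ₗ K i ∘ₗ L i))
    (hKsumpos : ∀ x : H, x ≠ 0 → 0 < (inner ℝ (Ksum x) x : ℝ))
    (w w' : H) (hw : Ksum w' = w)
    (y : ∀ i, Hi i) (z : ∀ i, Hi i) (hz : ∀ i, (K i) (z i) = y i)
    (hrep : w = ∑ i, d i • (LinearMap.adjoint (L i)) (y i)) :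
    (inner ℝ w' w : ℝ) ≤ ∑ i, d i * (inner ℝ (z i) (y i) : ℝ) ∧
      ((∀ i, y i = (K i) ((L i) w')) →
        (inner ℝ w' w : ℝ) = ∑ i, d i * (inner ℝ (z i) (y i) : ℝ)) :=
  stmt5_general d hd L K hKsymm hKpos Ksum hKsum w w' hw y z hz hrep
end

section
/- Let c_1,…,c_{m⁺} > 0 > c_{m⁺+1},…,c_m, and for each k let B_k : H → H_k be surjective linear maps between Euclidean spaces and A_k : H_k → H_k symmetric positive definite. Assume (B_1,…,B_{m⁺}) : H → H_1 × ⋯ × H_{m⁺} is surjective and that A := ∑_{k=1}^m c_k B_k* A_k B_k is positive definite. Then for any y_k ∈ H_k with y = ∑_{k=1}^m c_k B_k* y_k one has ⟨A⁻¹ y, y⟩ ≥ ∑_{k=1}^m c_k ⟨A_k⁻¹ y_k, y_k⟩, with equality when y_k = A_k B_k A⁻¹ y. -/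
/-!
Write `Q(v, w) = ∑ₖ cₖ ⟪vₖ, Aₖ wₖ⟫` and `zₖ = Aₖ⁻¹ yₖ`. Since `⟪x, y⟫ = Q(Bx, z)` and
`⟪x, A w⟫ = Q(Bx, Bw)`, the error `e = z - B(A⁻¹y)` is `Q`-orthogonal to the range of `B`, and
`∑ₖ cₖ ⟪zₖ, yₖ⟫ - ⟪A⁻¹y, y⟫ = Q(e, e)`. Since `(Bₖ)_{k < m⁺}` is jointly surjective there
is `x` with `(Bx)ₖ = eₖ` for `k < m⁺`; then `e - Bx` lives on the negative block, so
`Q(e, e) + Q(Bx, Bx) = Q(e - Bx, e - Bx) ≤ 0`, while `Q(Bx, Bx) = ⟪x, A x⟫ ≥ 0`.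
-/

open scoped RealInnerProductSpace

section SignedPairing

variable {ι : Type*} [Fintype ι] {E : ι → Type*} [∀ k, NormedAddCommGroup (E k)]
  [∀ k, InnerProductSpace ℝ (E k)] (c : ι → ℝ) (A : ∀ k, E k →ₗ[ℝ] E k)

def signedPairing (v w : ∀ k, E k) : ℝ :=
  ∑ k, c k * ⟪v k, A k (w k)⟫

variable {c A}

theorem signedPairing_comm (hA : ∀ k, (A k).IsSymmetric) (v w : ∀ k, E k) :
    signedPairing c A v w = signedPairing c A w v :=
  Finset.sum_congr rfl fun k _ => by rw [← hA k, real_inner_comm]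

theorem signedPairing_sub_left (u v w : ∀ k, E k) :
    signedPairing c A (u - v) w = signedPairing c A u w - signedPairing c A v w := by
  simp only [signedPairing, Pi.sub_apply, inner_sub_left, mul_sub, Finset.sum_sub_distrib]

theorem signedPairing_sub_right (u v w : ∀ k, E k) :
    signedPairing c A u (v - w) = signedPairing c A u v - signedPairing c A u w := by
  simp only [signedPairing, Pi.sub_apply, map_sub, inner_sub_right, mul_sub,
    Finset.sum_sub_distrib]

theorem signedPairing_sub_sub (hA : ∀ k, (A k).IsSymmetric) (v w : ∀ k, E k) :
    signedPairing c A (v - w) (v - w) =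
      signedPairing c A v v - 2 * signedPairing c A w v + signedPairing c A w w := by
  rw [signedPairing_sub_left, signedPairing_sub_right, signedPairing_sub_right,
    signedPairing_comm hA v w]
  ring

theorem signedPairing_self_nonpos_of_eq_zero {p : ι → Prop} (hc : ∀ k, ¬p k → c k ≤ 0)
    (hA : ∀ k, (A k).IsPositive) {d : ∀ k, E k} (hd : ∀ k, p k → d k = 0) :
    signedPairing c A d d ≤ 0 := by
  refine Finset.sum_nonpos fun k _ => ?_
  by_cases hk : p k
  · simp [hd k hk]
  · exact mul_nonpos_of_nonpos_of_nonneg (hc k hk) ((hA k).inner_nonneg_right _)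

theorem signedPairing_self_nonpos {p : ι → Prop} (hc : ∀ k, ¬p k → c k ≤ 0)
    (hA : ∀ k, (A k).IsPositive) {u e : ∀ k, E k} (hue : ∀ k, p k → u k = e k)
    (horth : signedPairing c A u e = 0) (hu : 0 ≤ signedPairing c A u u) :
    signedPairing c A e e ≤ 0 := by
  have hdiff := signedPairing_self_nonpos_of_eq_zero hc hA (d := e - u)
    fun k hk => sub_eq_zero.mpr (hue k hk).symm
  rw [signedPairing_sub_sub (fun k => (hA k).isSymmetric), horth] at hdiff
  linarith

theorem inner_sum_smul_adjoint_eq_signedPairing {H : Type*} [NormedAddCommGroup H]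
    [InnerProductSpace ℝ H] [FiniteDimensional ℝ H] [∀ k, FiniteDimensional ℝ (E k)]
    (B : ∀ k, H →ₗ[ℝ] E k) (x : H) (w : ∀ k, E k) :
    ⟪x, ∑ k, c k • LinearMap.adjoint (B k) (A k (w k))⟫ = signedPairing c A (fun k => B k x) w := by
  simp only [signedPairing, inner_sum, real_inner_smul_right, LinearMap.adjoint_inner_right]

end SignedPairing

theorem stmt6_general {m mp : ℕ}
    {H : Type*} [NormedAddCommGroup H] [InnerProductSpace ℝ H] [FiniteDimensional ℝ H]
    {Hk : Fin m → Type*} [∀ k, NormedAddCommGroup (Hk k)]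
    [∀ k, InnerProductSpace ℝ (Hk k)] [∀ k, FiniteDimensional ℝ (Hk k)]
    (c : Fin m → ℝ)
    (hcneg : ∀ k : Fin m, mp ≤ (k : ℕ) → c k < 0)
    (B : ∀ k, H →ₗ[ℝ] Hk k)
    (A : ∀ k, Hk k →ₗ[ℝ] Hk k)
    (hAsymm : ∀ k, ∀ x y : Hk k, (inner ℝ ((A k) x) y : ℝ) = inner ℝ x ((A k) y))
    (hApos : ∀ k, ∀ x : Hk k, x ≠ 0 → 0 < (inner ℝ ((A k) x) x : ℝ))
    (hBplus : Function.Surjective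
      (fun (x : H) (i : {k : Fin m // (k : ℕ) < mp}) => (B i.1) x))
    (Asum : H →ₗ[ℝ] H)
    (hAsum : Asum = ∑ k, c k • (LinearMap.adjoint (B k) ∘ₗ A k ∘ₗ B k))
    (hAsumpos : ∀ x : H, x ≠ 0 → 0 < (inner ℝ (Asum x) x : ℝ))
    (y y' : H) (hy : Asum y' = y)
    (yk : ∀ k, Hk k) (zk : ∀ k, Hk k) (hz : ∀ k, (A k) (zk k) = yk k)
    (hrep : y = ∑ k, c k • (LinearMap.adjoint (B k)) (yk k)) :
    (∑ k, c k * (inner ℝ (zk k) (yk k) : ℝ)) ≤ (inner ℝ y' y : ℝ) ∧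
      ((∀ k, yk k = (A k) ((B k) y')) →
        (inner ℝ y' y : ℝ) = ∑ k, c k * (inner ℝ (zk k) (yk k) : ℝ)) := by
  obtain rfl : yk = fun k => A k (zk k) := funext fun k => (hz k).symm
  have hA : ∀ k, (A k).IsPositive := fun k => (A k).isPositive_iff.mpr
    ⟨hAsymm k, fun x => (eq_or_ne x 0).elim (fun hx => by simp [hx]) fun hx => (hApos k x hx).le⟩
  have hA_symm : ∀ k, (A k).IsSymmetric := fun k => (hA k).isSymmetric
  let Bv : H → ∀ k, Hk k := fun x k => B k x
  have hpair : ∀ x, ⟪x, y⟫ = signedPairing c A (Bv x) zk := fun x => by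
    rw [hrep, inner_sum_smul_adjoint_eq_signedPairing]
  have hAsum_pair : ∀ x w, ⟪x, Asum w⟫ = signedPairing c A (Bv x) (Bv w) := fun x w => by
    simp only [hAsum, LinearMap.sum_apply, LinearMap.smul_apply, LinearMap.comp_apply]
    exact inner_sum_smul_adjoint_eq_signedPairing B x (Bv w)
  refine ⟨?_, fun hyk => ?_⟩
  · set e := zk - Bv y'
    have hgap : signedPairing c A zk zk = signedPairing c A e e + ⟪y', y⟫ := by
      rw [signedPairing_sub_sub hA_symm, ← hpair, ← hAsum_pair, hy]
      ring
    obtain ⟨x, hx⟩ := hBplus fun i => e i.1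
    have horth : signedPairing c A (Bv x) e = 0 := by
      rw [signedPairing_sub_right, ← hpair, ← hAsum_pair, hy, sub_self]
    have hBx : 0 ≤ signedPairing c A (Bv x) (Bv x) := by
      rw [← hAsum_pair, real_inner_comm]
      exact (eq_or_ne x 0).elim (fun hx => by simp [hx]) fun hx => (hAsumpos x hx).le
    have hQ := signedPairing_self_nonpos (p := fun k : Fin m => (k : ℕ) < mp)
      (fun k hk => (hcneg k (not_lt.mp hk)).le) hA (fun k hk => congrFun hx ⟨k, hk⟩)
      horth hBx
    change signedPairing c A zk zk ≤ _
    linarith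
  · rw [hpair, signedPairing_comm hA_symm]
    exact Finset.sum_congr rfl fun k _ => by rw [← hyk k]

theorem stmt6 {m mp : ℕ} (hmp : mp ≤ m)
    {H : Type*} [NormedAddCommGroup H] [InnerProductSpace ℝ H] [FiniteDimensional ℝ H]
    {Hk : Fin m → Type*} [∀ k, NormedAddCommGroup (Hk k)]
    [∀ k, InnerProductSpace ℝ (Hk k)] [∀ k, FiniteDimensional ℝ (Hk k)]
    (c : Fin m → ℝ) (hcpos : ∀ k : Fin m, (k : ℕ) < mp → 0 < c k)
    (hcneg : ∀ k : Fin m, mp ≤ (k : ℕ) → c k < 0)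
    (B : ∀ k, H →ₗ[ℝ] Hk k) (hB : ∀ k, Function.Surjective (B k))
    (A : ∀ k, Hk k →ₗ[ℝ] Hk k)
    (hAsymm : ∀ k, ∀ x y : Hk k, (inner ℝ ((A k) x) y : ℝ) = inner ℝ x ((A k) y))
    (hApos : ∀ k, ∀ x : Hk k, x ≠ 0 → 0 < (inner ℝ ((A k) x) x : ℝ))
    (hBplus : Function.Surjective
      (fun (x : H) (i : {k : Fin m // (k : ℕ) < mp}) => (B i.1) x))
    (Asum : H →ₗ[ℝ] H)
    (hAsum : Asum = ∑ k, c k • (LinearMap.adjoint (B k) ∘ₗ A k ∘ₗ B k))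
    (hAsumpos : ∀ x : H, x ≠ 0 → 0 < (inner ℝ (Asum x) x : ℝ))
    (y y' : H) (hy : Asum y' = y)
    (yk : ∀ k, Hk k) (zk : ∀ k, Hk k) (hz : ∀ k, (A k) (zk k) = yk k)
    (hrep : y = ∑ k, c k • (LinearMap.adjoint (B k)) (yk k)) :
    (∑ k, c k * (inner ℝ (zk k) (yk k) : ℝ)) ≤ (inner ℝ y' y : ℝ) ∧
      ((∀ k, yk k = (A k) ((B k) y')) →
        (inner ℝ y' y : ℝ) = ∑ k, c k * (inner ℝ (zk k) (yk k) : ℝ)) :=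
  stmt6_general c hcneg B A hAsymm hApos hBplus Asum hAsum hAsumpos y y' hy yk zk hz hrep
end

section
/- Let f : H → ℝ ∪ {+∞} be a convex lower semicontinuous function with nonempty domain such that the subdifferential ∂f(x) is empty at every boundary point x of dom f, and let g : H → ℝ be convex. If f(x) − g(x) → +∞ as |x| → ∞, then f − g attains its infimum at a point in the interior of dom f. -/
/-!
Coercivity and lower semicontinuity give a global minimiser `x₁` of `f - g`, and `f x₁ < ⊤`
because `f - g < ⊤` somewhere. The continuous convex function `g` has a subgradient at
`x₁`, and since `x₁` minimises `f - g`, that subgradient of `g` is also one of `f`. Hence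
`∂f(x₁) ≠ ∅`, so `x₁` is not a boundary point of `dom f`, and it lies in the interior.
-/

open Set Filter

theorem LowerSemicontinuous.exists_forall_le' {α β : Type*}
    [TopologicalSpace α] [LinearOrder β] {h : α → β} (hh : LowerSemicontinuous h) {x₀ : α}
    (hx₀ : ∀ᶠ x in cocompact α, h x₀ ≤ h x) : ∃ x, ∀ y, h x ≤ h y := by
  obtain ⟨K, hK, hKc⟩ := mem_cocompact.1 hx₀
  obtain ⟨x, hxK, hx⟩ := LowerSemicontinuousOn.exists_isMinOn (insert_nonempty x₀ K)
    (hK.insert x₀) (hh.lowerSemicontinuousOn _)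
  refine ⟨x, fun y => ?_⟩
  by_cases hy : y ∈ insert x₀ K
  · exact hx hy
  · exact (hx (mem_insert _ _)).trans (hKc fun hyK => hy (mem_insert_of_mem _ hyK))

theorem LowerSemicontinuous.sub_coe {α : Type*} [TopologicalSpace α] {f : α → EReal}
    (hf : LowerSemicontinuous f) {g : α → ℝ} (hg : Continuous g) :
    LowerSemicontinuous fun x => f x - (g x : EReal) := by
  have hg' : Continuous fun x => ((-g x : ℝ) : EReal) :=
    continuous_coe_real_ereal.comp hg.neg
  simpa only [EReal.coe_neg, ← sub_eq_add_neg] using hf.add' hg'.lowerSemicontinuous fun x =>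
    EReal.continuousAt_add (Or.inr (EReal.coe_ne_bot _)) (Or.inr (EReal.coe_ne_top _))

theorem EReal.add_coe_le_of_sub_coe_le_sub_coe {u v : EReal} {a b c : ℝ}
    (huv : u - b ≤ v - c) (habc : b + a ≤ c) : u + a ≤ v := by
  induction u <;> induction v <;> simp_all [← EReal.coe_sub, ← EReal.coe_add]
  linarith

theorem ConvexOn.exists_subgradient {E : Type*} [NormedAddCommGroup E] [NormedSpace ℝ E]
    {g : E → ℝ} (hg : ConvexOn ℝ univ g) (hgc : Continuous g) (x : E) :
    ∃ ℓ : E →L[ℝ] ℝ, ∀ y, g x + ℓ (y - x) ≤ g y := by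
  -- Separate `(x, g x)` from the open strict epigraph; the separating functional has negative
  -- vertical slope `c`, and rescaling its horizontal part by `(-c)⁻¹` gives the subgradient.
  set S : Set (E × ℝ) := {p | g p.1 < p.2}
  have hS : IsOpen S := isOpen_lt (hgc.comp continuous_fst) continuous_snd
  obtain ⟨φ, hφ⟩ := geometric_hahn_banach_open_point (by simpa using hg.convex_strict_epigraph)
    hS (x := (x, g x)) (lt_irrefl (g x))
  set c := φ (0, 1)
  have hφ_apply : ∀ y t, φ (y, t) = φ (y, 0) + t * c := by
    intro y t
    rw [← smul_eq_mul, ← map_smul, ← map_add, Prod.smul_mk, Prod.mk_add_mk]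
    simp
  have hc : c < 0 := by
    have := hφ (x, g x + 1) (by simp [S])
    rw [hφ_apply x, hφ_apply x (g x)] at this
    linarith
  have hle : ∀ y, φ (y, g y) ≤ φ (x, g x) := by
    intro y
    have hmem : (y, g y) ∈ closure S := by
      refine mem_closure_of_tendsto ((continuous_const.prodMk continuous_id).tendsto (g y)
        |>.mono_left (nhdsWithin_le_nhds (s := Ioi (g y)))) ?_
      filter_upwards [self_mem_nhdsWithin] with t (ht : g y < t) using ht
    exact closure_minimal (fun p hp => (hφ p hp).le) (isClosed_le φ.continuous continuous_const)
      hmem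
  refine ⟨(-c)⁻¹ • φ.comp (ContinuousLinearMap.inl ℝ E ℝ), fun y => ?_⟩
  have := hle y
  rw [hφ_apply y, hφ_apply x] at this
  have hφ_sub : φ (y - x, 0) = φ (y, 0) - φ (x, 0) := by
    rw [← map_sub, Prod.mk_sub_mk, sub_zero]
  simp only [smul_apply, ContinuousLinearMap.comp_apply,
    ContinuousLinearMap.inl_apply, smul_eq_mul, hφ_sub]
  rw [← le_sub_iff_add_le', inv_mul_le_iff₀ (neg_pos.2 hc)]
  linarith

theorem ConvexOn.exists_inner_subgradient {E : Type*} [NormedAddCommGroup E]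
    [InnerProductSpace ℝ E] [CompleteSpace E] {g : E → ℝ} (hg : ConvexOn ℝ univ g)
    (hgc : Continuous g) (x : E) :
    ∃ xs : E, ∀ y, g x + inner ℝ xs (y - x) ≤ g y := by
  obtain ⟨ℓ, hℓ⟩ := hg.exists_subgradient hgc x
  refine ⟨(InnerProductSpace.toDual ℝ E).symm ℓ, ?_⟩
  simpa [InnerProductSpace.toDual_symm_apply] using hℓ

theorem stmt7_general {H : Type*} [NormedAddCommGroup H] [InnerProductSpace ℝ H]
    [FiniteDimensional ℝ H]
    (f : H → EReal)
    (hflsc : LowerSemicontinuous f)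
    (hdom : ∃ x, f x < ⊤)
    (hbd : ∀ x ∈ frontier {x : H | f x < ⊤},
      ¬ ∃ xs : H, ∀ y : H, f x + ((inner ℝ xs (y - x) : ℝ) : EReal) ≤ f y)
    (g : H → ℝ) (hg : ConvexOn ℝ Set.univ g)
    (hcoerc : ∀ M : ℝ, ∃ Rr : ℝ, ∀ x : H, Rr ≤ ‖x‖ → (M : EReal) ≤ f x - (g x : EReal)) :
    ∃ x ∈ interior {x : H | f x < ⊤},
      ∀ y : H, f x - (g x : EReal) ≤ f y - (g y : EReal) := by
  have hgc : Continuous g := continuousOn_univ.1 (hg.continuousOn isOpen_univ)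
  obtain ⟨x₀, hx₀⟩ := hdom
  have hx₀_ne_top : f x₀ - (g x₀ : EReal) ≠ ⊤ :=
    (EReal.add_lt_top hx₀.ne (EReal.coe_ne_top (-g x₀))).ne
  obtain ⟨R, hR⟩ := hcoerc (f x₀ - (g x₀ : EReal)).toReal
  have hx₀_le : ∀ᶠ x in cocompact H, f x₀ - (g x₀ : EReal) ≤ f x - (g x : EReal) :=
    (tendsto_norm_cocompact_atTop.eventually_ge_atTop R).mono fun x hx =>
      (EReal.le_coe_toReal hx₀_ne_top).trans (hR x hx)
  obtain ⟨x₁, hx₁⟩ := (hflsc.sub_coe hgc).exists_forall_le' hx₀_le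
  have hx₁_dom : f x₁ < ⊤ := by
    refine lt_top_iff_ne_top.2 fun h => hx₀_ne_top (top_le_iff.1 ?_)
    simpa [h] using hx₁ x₀
  refine ⟨x₁, by_contra fun hint => hbd x₁ ⟨subset_closure hx₁_dom, hint⟩ ?_, hx₁⟩
  obtain ⟨xs, hxs⟩ := hg.exists_inner_subgradient hgc x₁
  exact ⟨xs, fun y => EReal.add_coe_le_of_sub_coe_le_sub_coe (hx₁ y) (hxs y)⟩

theorem stmt7 {H : Type*} [NormedAddCommGroup H] [InnerProductSpace ℝ H]
    [FiniteDimensional ℝ H]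
    (f : H → EReal) (hfne : ∀ x, f x ≠ ⊥)
    (hfconv : ∀ x y : H, ∀ a b : ℝ, 0 ≤ a → 0 ≤ b → a + b = 1 →
      f (a • x + b • y) ≤ (a : EReal) * f x + (b : EReal) * f y)
    (hflsc : LowerSemicontinuous f)
    (hdom : ∃ x, f x < ⊤)
    (hbd : ∀ x ∈ frontier {x : H | f x < ⊤},
      ¬ ∃ xs : H, ∀ y : H, f x + ((inner ℝ xs (y - x) : ℝ) : EReal) ≤ f y)
    (g : H → ℝ) (hg : ConvexOn ℝ Set.univ g)
    (hcoerc : ∀ M : ℝ, ∃ Rr : ℝ, ∀ x : H, Rr ≤ ‖x‖ → (M : EReal) ≤ f x - (g x : EReal)) :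
    ∃ x ∈ interior {x : H | f x < ⊤},
      ∀ y : H, f x - (g x : EReal) ≤ f y - (g y : EReal) :=
  stmt7_general f hflsc hdom hbd g hg hcoerc
end

section
/- Let ψ : ℝⁿ → ℝ be a convex function with dom ψ = ℝⁿ. If ψ is strictly convex, then the union of all subdifferentials ∂ψ(x) over x ∈ ℝⁿ equals the interior of the domain of the Legendre conjugate ψ*. -/
/-!
If `y ∈ ∂ψ(x)` lay on the boundary of `dom ψ*`, take an outer normal `d` of `dom ψ*` at `y` and a
subgradient `y'` of `ψ` at `x + d`; since `y' ∈ dom ψ*`, `⟪y' - y, d⟫ ≤ 0`, whereas strict convexity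
makes `∂ψ` strictly monotone. Conversely, `ψ*` is a finite convex function on `dom ψ*`, so at an
interior point `y` it has a subgradient `x`; testing it against a subgradient of `ψ` at `x` gives
equality in the Fenchel–Young inequality at `(x, y)`, i.e. `y ∈ ∂ψ(x)`.
-/

open Set Filter Topology InnerProductSpace RealInnerProductSpace

section Normed

variable {E : Type*} [NormedAddCommGroup E] [NormedSpace ℝ E]

theorem ConvexOn.exists_strongDual_le {s : Set E} {f : E → ℝ} (hs : IsOpen s)
    (hf : ConvexOn ℝ s f) (hfc : ContinuousOn f s) {x : E} (hx : x ∈ s) :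
    ∃ l : StrongDual ℝ E, ∀ z ∈ s, f x + l (z - x) ≤ f z := by
  set U : Set (E × ℝ) := {p | p.1 ∈ s ∧ f p.1 < p.2}
  have hU : IsOpen U := by
    have hg : ContinuousOn (fun p : E × ℝ => f p.1 - p.2) (Prod.fst ⁻¹' s) :=
      (hfc.comp continuous_fst.continuousOn (mapsTo_preimage _ _)).sub
        continuous_snd.continuousOn
    convert hg.isOpen_inter_preimage (hs.preimage continuous_fst) (isOpen_Iio (a := 0)) using 1
    ext p
    simp [U, sub_neg]
  obtain ⟨l, hl⟩ := geometric_hahn_banach_open_point hf.convex_strict_epigraph hU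
    (fun h : (x, f x) ∈ U => h.2.false)
  have hlz : ∀ z ∈ s, l (z, f z) ≤ l (x, f x) := by
    intro z hz
    have hlim : Tendsto (fun ε : ℝ => l (z, f z + ε)) (𝓝[>] 0) (𝓝 (l (z, f z))) := by
      have : Continuous fun ε : ℝ => l (z, f z + ε) := by fun_prop
      simpa using (this.tendsto 0).mono_left nhdsWithin_le_nhds
    exact le_of_tendsto hlim (eventually_nhdsWithin_of_forall fun ε (hε : 0 < ε) =>
      (hl _ ⟨hz, lt_add_of_pos_right _ hε⟩).le)
  have hsplit : ∀ z t, l (z, t) = l (z, 0) + t * l (0, 1) := by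
    intro z t
    rw [← smul_eq_mul, ← map_smul, ← map_add]
    simp
  have hc : l (0, 1) < 0 := by
    have := hl (x, f x + 1) ⟨hx, lt_add_one _⟩
    rw [hsplit x, hsplit x (f x)] at this
    linarith
  -- rescale the horizontal part of `l` so that its vertical component becomes `-1`
  refine ⟨(-l (0, 1))⁻¹ • l.comp (.inl ℝ E ℝ), fun z hz => ?_⟩
  have hz := hlz z hz
  rw [hsplit z, hsplit x] at hz
  have hlin : l (z - x, 0) = l (z, 0) - l (x, 0) := by
    rw [← map_sub]; simp
  have : (-l (0, 1))⁻¹ * l (z - x, 0) ≤ f z - f x := by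
    rw [inv_mul_le_iff₀ (neg_pos.mpr hc)]
    nlinarith
  simpa [add_comm (f x), ← le_sub_iff_add_le] using this

end Normed

theorem EReal.iSup_coe_lt_top_iff {ι : Sort*} {f : ι → ℝ} :
    (⨆ i, (f i : EReal)) < ⊤ ↔ BddAbove (range f) := by
  constructor
  · intro h
    obtain ⟨C, hC, -⟩ := EReal.lt_iff_exists_real_btwn.mp h
    exact ⟨C, forall_mem_range.mpr fun i =>
      EReal.coe_le_coe_iff.mp ((le_iSup (fun i => (f i : EReal)) i).trans hC.le)⟩
  · rintro ⟨C, hC⟩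
    exact (iSup_le fun i => EReal.coe_le_coe_iff.mpr (hC (mem_range_self i))).trans_lt
      (EReal.coe_lt_top C)

section InnerProduct

variable {E : Type*} [NormedAddCommGroup E] [InnerProductSpace ℝ E]

def HasSubgradientWithinAt (f : E → ℝ) (g : E) (s : Set E) (x : E) : Prop :=
  ∀ z ∈ s, f x + ⟪g, z - x⟫ ≤ f z

def HasSubgradientAt (f : E → ℝ) (g x : E) : Prop :=
  ∀ z, f x + ⟪g, z - x⟫ ≤ f z

def conjugateDomain (f : E → ℝ) : Set E :=
  {y | BddAbove (range fun x => ⟪x, y⟫ - f x)}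

/-- The convex conjugate, as a real number; it is the junk value `0` off `conjugateDomain f`. -/
noncomputable def conjugate (f : E → ℝ) (y : E) : ℝ :=
  ⨆ x, ⟪x, y⟫ - f x

variable {f : E → ℝ} {s : Set E} {g x y : E}

theorem ConvexOn.exists_hasSubgradientWithinAt [FiniteDimensional ℝ E] (hs : IsOpen s)
    (hf : ConvexOn ℝ s f) (hx : x ∈ s) : ∃ g, HasSubgradientWithinAt f g s x := by
  obtain ⟨l, hl⟩ := hf.exists_strongDual_le hs (hf.continuousOn hs) hx
  exact ⟨(toDual ℝ E).symm l, fun z hz => by simpa only [toDual_symm_apply] using hl z hz⟩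

theorem ConvexOn.exists_hasSubgradientAt [FiniteDimensional ℝ E] (hf : ConvexOn ℝ univ f)
    (x : E) : ∃ g, HasSubgradientAt f g x :=
  (hf.exists_hasSubgradientWithinAt isOpen_univ (mem_univ x)).imp fun _ h z => h z (mem_univ z)

/-- For `z ∈ s` the midpoint of `x` and `z` lies in `interior s`. -/
theorem HasSubgradientWithinAt.of_interior (hf : ConvexOn ℝ s f) (hx : x ∈ interior s)
    (hg : HasSubgradientWithinAt f g (interior s) x) : HasSubgradientWithinAt f g s x := by
  intro z hz
  have hmid := hg _ (hf.1.combo_interior_self_mem_interior hx hz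
    (by norm_num : (0 : ℝ) < 1 / 2) (by norm_num : (0 : ℝ) ≤ 1 / 2) (by norm_num))
  have hconv := hf.2 (interior_subset hx) hz
    (by norm_num : (0 : ℝ) ≤ 1 / 2) (by norm_num : (0 : ℝ) ≤ 1 / 2) (by norm_num)
  have hsub : ((1 / 2 : ℝ) • x + (1 / 2 : ℝ) • z) - x = (1 / 2 : ℝ) • (z - x) := by module
  rw [hsub, real_inner_smul_right] at hmid
  rw [smul_eq_mul, smul_eq_mul] at hconv
  linarith

theorem hasSubgradientAt_iff_inner_sub_le :
    HasSubgradientAt f g x ↔ ∀ z, ⟪z, g⟫ - f z ≤ ⟪x, g⟫ - f x := by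
  refine forall_congr' fun z => ?_
  rw [inner_sub_right, real_inner_comm g z, real_inner_comm g x]
  constructor <;> intro h <;> linarith

theorem le_conjugate (hy : y ∈ conjugateDomain f) (x : E) : ⟪x, y⟫ - f x ≤ conjugate f y :=
  le_ciSup hy x

theorem conjugate_le {C : ℝ} (h : ∀ x, ⟪x, y⟫ - f x ≤ C) : conjugate f y ≤ C :=
  ciSup_le h

theorem HasSubgradientAt.mem_conjugateDomain (hg : HasSubgradientAt f g x) :
    g ∈ conjugateDomain f :=
  ⟨_, forall_mem_range.mpr (hasSubgradientAt_iff_inner_sub_le.mp hg)⟩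

theorem HasSubgradientAt.conjugate_eq (hg : HasSubgradientAt f g x) :
    conjugate f g = ⟪x, g⟫ - f x :=
  (conjugate_le (hasSubgradientAt_iff_inner_sub_le.mp hg)).antisymm
    (le_conjugate hg.mem_conjugateDomain x)

theorem inner_convexCombo_sub {a b : ℝ} (hab : a + b = 1) (x y y' : E) (c : ℝ) :
    ⟪x, a • y + b • y'⟫ - c = a * (⟪x, y⟫ - c) + b * (⟪x, y'⟫ - c) := by
  rw [inner_add_right, real_inner_smul_right, real_inner_smul_right]
  linear_combination c * hab

theorem convex_conjugateDomain : Convex ℝ (conjugateDomain f) := by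
  rintro y ⟨C, hC⟩ y' ⟨C', hC'⟩ a b ha hb hab
  refine ⟨a * C + b * C', forall_mem_range.mpr fun x => ?_⟩
  rw [inner_convexCombo_sub hab]
  gcongr
  exacts [hC (mem_range_self x), hC' (mem_range_self x)]

theorem convexOn_conjugate : ConvexOn ℝ (conjugateDomain f) (conjugate f) := by
  refine ⟨convex_conjugateDomain, fun y hy y' hy' a b ha hb hab => conjugate_le fun x => ?_⟩
  rw [inner_convexCombo_sub hab, smul_eq_mul, smul_eq_mul]
  gcongr
  exacts [le_conjugate hy x, le_conjugate hy' x]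

theorem HasSubgradientWithinAt.hasSubgradientAt_of_conjugate
    (hx : HasSubgradientWithinAt (conjugate f) x (conjugateDomain f) y)
    (hy : y ∈ conjugateDomain f) (hf : ∃ g, HasSubgradientAt f g x) : HasSubgradientAt f y x := by
  obtain ⟨g, hg⟩ := hf
  have hfx : f x ≤ ⟪x, y⟫ - conjugate f y := by
    have := hx g hg.mem_conjugateDomain
    rw [hg.conjugate_eq, inner_sub_right] at this
    linarith
  exact hasSubgradientAt_iff_inner_sub_le.mpr fun z => by linarith [le_conjugate hy z]

theorem StrictConvexOn.inner_sub_pos_of_hasSubgradientAt (hf : StrictConvexOn ℝ univ f)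
    {x' g' : E} (hg : HasSubgradientAt f g x) (hg' : HasSubgradientAt f g' x') (hne : x ≠ x') :
    0 < ⟪g' - g, x' - x⟫ := by
  set m := (1 / 2 : ℝ) • x + (1 / 2 : ℝ) • x'
  have hstrict := hf.2 (mem_univ x) (mem_univ x') hne
    (by norm_num : (0 : ℝ) < 1 / 2) (by norm_num : (0 : ℝ) < 1 / 2) (by norm_num)
  have h := hg m
  have h' := hg' m
  have hm : m - x = (1 / 2 : ℝ) • (x' - x) := by module
  have hm' : m - x' = -((1 / 2 : ℝ) • (x' - x)) := by module
  rw [hm, real_inner_smul_right] at h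
  rw [hm', inner_neg_right, real_inner_smul_right] at h'
  rw [smul_eq_mul, smul_eq_mul] at hstrict
  rw [inner_sub_left]
  linarith

theorem exists_ne_zero_inner_eq_of_affineSpan_ne_top [FiniteDimensional ℝ E] {D : Set E}
    (hD : affineSpan ℝ D ≠ ⊤) (hy : y ∈ D) : ∃ d ≠ 0, ∀ y' ∈ D, ⟪d, y'⟫ = ⟪d, y⟫ := by
  have hdir : (affineSpan ℝ D).direction ≠ ⊤ := fun h =>
    hD ((AffineSubspace.direction_eq_top_iff_of_nonempty ⟨y, subset_affineSpan ℝ D hy⟩).mp h)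
  obtain ⟨d, hd, hd0⟩ := Submodule.exists_mem_ne_zero_of_ne_bot
    (mt Submodule.orthogonal_eq_bot_iff.mp hdir)
  refine ⟨d, hd0, fun y' hy' => ?_⟩
  have hv : y' - y ∈ (affineSpan ℝ D).direction :=
    AffineSubspace.vsub_mem_direction (subset_affineSpan ℝ D hy') (subset_affineSpan ℝ D hy)
  rw [← sub_eq_zero, ← inner_sub_right, real_inner_comm]
  exact (Submodule.mem_orthogonal _ d).mp hd _ hv

theorem Convex.exists_ne_zero_inner_le_of_notMem_interior [FiniteDimensional ℝ E] {D : Set E}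
    (hD : Convex ℝ D) (hy : y ∈ D) (hyD : y ∉ interior D) :
    ∃ d ≠ 0, ∀ y' ∈ D, ⟪d, y'⟫ ≤ ⟪d, y⟫ := by
  rcases (interior D).eq_empty_or_nonempty with hint | hint
  · have hspan : affineSpan ℝ D ≠ ⊤ := fun h =>
      (hD.interior_nonempty_iff_affineSpan_eq_top.mpr h).ne_empty hint
    obtain ⟨d, hd0, hd⟩ := exists_ne_zero_inner_eq_of_affineSpan_ne_top hspan hy
    exact ⟨d, hd0, fun y' hy' => (hd y' hy').le⟩
  · obtain ⟨l, hl0, hl⟩ := geometric_hahn_banach_of_nonempty_interior_point hD hyD hint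
    refine ⟨(toDual ℝ E).symm l, by simpa using hl0, fun y' hy' => ?_⟩
    simpa only [toDual_symm_apply] using hl y' hy'

theorem StrictConvexOn.mem_interior_conjugateDomain [FiniteDimensional ℝ E]
    (hf : StrictConvexOn ℝ univ f) (hy : HasSubgradientAt f y x) :
    y ∈ interior (conjugateDomain f) := by
  by_contra hyD
  obtain ⟨d, hd0, hd⟩ := convex_conjugateDomain.exists_ne_zero_inner_le_of_notMem_interior
    hy.mem_conjugateDomain hyD
  obtain ⟨y', hy'⟩ := hf.convexOn.exists_hasSubgradientAt (x + d)
  have hpos := hf.inner_sub_pos_of_hasSubgradientAt hy hy' (by simpa using hd0)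
  rw [add_sub_cancel_left, inner_sub_left, real_inner_comm, real_inner_comm d y] at hpos
  linarith [hd y' hy'.mem_conjugateDomain]

theorem ConvexOn.exists_hasSubgradientAt_of_mem_interior_conjugateDomain [FiniteDimensional ℝ E]
    (hf : ConvexOn ℝ univ f) (hy : y ∈ interior (conjugateDomain f)) :
    ∃ x, HasSubgradientAt f y x := by
  obtain ⟨x, hx⟩ := (convexOn_conjugate.subset interior_subset convex_conjugateDomain.interior
    ).exists_hasSubgradientWithinAt isOpen_interior hy
  exact ⟨x, (hx.of_interior convexOn_conjugate hy).hasSubgradientAt_of_conjugate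
    (interior_subset hy) (hf.exists_hasSubgradientAt x)⟩

end InnerProduct

theorem stmt8 {n : ℕ} (ψ : EuclideanSpace ℝ (Fin n) → ℝ)
    (hψ : StrictConvexOn ℝ Set.univ ψ) :
    {y : EuclideanSpace ℝ (Fin n) |
        ∃ x, ∀ z, ψ x + (inner ℝ y (z - x) : ℝ) ≤ ψ z} =
      interior {y : EuclideanSpace ℝ (Fin n) |
        (⨆ x, (((inner ℝ x y : ℝ) - ψ x : ℝ) : EReal)) < ⊤} := by
  simp_rw [EReal.iSup_coe_lt_top_iff]
  ext y
  exact ⟨fun ⟨_, hy⟩ => hψ.mem_interior_conjugateDomain hy,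
    hψ.convexOn.exists_hasSubgradientAt_of_mem_interior_conjugateDomain⟩
end

section
/- Let R be a p×n real matrix and S an r×n real matrix, and let M be the block matrix [[−I_p + R Rᵀ, R Sᵀ],[S Rᵀ, I_r + S Sᵀ]]. Then M is positive semidefinite if and only if R (I_n + Sᵀ S)⁻¹ Rᵀ ≥ I_p (in the Loewner order). -/
/-! Since `1 + S Sᵀ` is positive definite, the block matrix is positive semidefinite iff its
Schur complement `-1 + R Rᵀ - R Sᵀ (1 + S Sᵀ)⁻¹ S Rᵀ` is. The identity
`(1 + Sᵀ S)⁻¹ = 1 - Sᵀ (1 + S Sᵀ)⁻¹ S` turns that complement into `R (1 + Sᵀ S)⁻¹ Rᵀ - 1`. -/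

open Matrix
open scoped ComplexOrder

namespace Matrix

variable {m n : Type*} [Fintype m] [Fintype n] [DecidableEq m]

theorem inv_one_add_mul_eq_one_sub [DecidableEq n] {α : Type*} [CommRing α] (A : Matrix m n α)
    (B : Matrix n m α) (h : IsUnit (1 + A * B)) :
    (1 + B * A)⁻¹ = 1 - B * (1 + A * B)⁻¹ * A := by
  refine inv_eq_right_inv ?_
  calc (1 + B * A) * (1 - B * (1 + A * B)⁻¹ * A)
      = 1 + B * A - B * ((1 + A * B) * (1 + A * B)⁻¹) * A := by
        simp only [Matrix.mul_add, Matrix.add_mul, Matrix.mul_sub, Matrix.one_mul,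
          Matrix.mul_one, Matrix.mul_assoc]
    _ = 1 := by
      rw [mul_nonsing_inv _ ((isUnit_iff_isUnit_det _).mp h), Matrix.mul_one, add_sub_cancel_right]

variable {𝕜 : Type*} [RCLike 𝕜]

theorem posDef_one_add_mul_conjTranspose (S : Matrix m n 𝕜) : (1 + S * Sᴴ).PosDef :=
  PosDef.one.add_posSemidef (posSemidef_self_mul_conjTranspose S)

theorem mul_conjTranspose_sub_mul_inv_one_add_mul_conjTranspose [DecidableEq n] {p : Type*}
    [Fintype p] (R : Matrix p n 𝕜) (S : Matrix m n 𝕜) :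
    R * Rᴴ - R * Sᴴ * (1 + S * Sᴴ)⁻¹ * (R * Sᴴ)ᴴ = R * (1 + Sᴴ * S)⁻¹ * Rᴴ := by
  rw [inv_one_add_mul_eq_one_sub S Sᴴ (posDef_one_add_mul_conjTranspose S).isUnit]
  simp only [conjTranspose_mul, conjTranspose_conjTranspose, Matrix.mul_sub, Matrix.sub_mul,
    Matrix.one_mul, Matrix.mul_assoc]

end Matrix

theorem stmt11 {p r n : ℕ} (R : Matrix (Fin p) (Fin n) ℝ) (S : Matrix (Fin r) (Fin n) ℝ) :
    (Matrix.fromBlocks (-(1 : Matrix (Fin p) (Fin p) ℝ) + R * Rᵀ) (R * Sᵀ)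
        (S * Rᵀ) ((1 : Matrix (Fin r) (Fin r) ℝ) + S * Sᵀ)).PosSemidef ↔
      (R * ((1 : Matrix (Fin n) (Fin n) ℝ) + Sᵀ * S)⁻¹ * Rᵀ -
        (1 : Matrix (Fin p) (Fin p) ℝ)).PosSemidef := by
  simp only [← conjTranspose_eq_transpose_of_trivial]
  have hD := posDef_one_add_mul_conjTranspose S
  have := hD.isUnit.invertible
  have hSR : S * Rᴴ = (R * Sᴴ)ᴴ := by rw [conjTranspose_mul, conjTranspose_conjTranspose]
  rw [hSR, PosDef.fromBlocks₂₂ _ _ hD, ← mul_conjTranspose_sub_mul_inv_one_add_mul_conjTranspose,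
    neg_add_eq_sub, sub_right_comm]
end

section
/- Let R be an invertible n×n real matrix and S an r×n real matrix, and let M be the block matrix [[−I_n + R Rᵀ, R Sᵀ],[S Rᵀ, I_r + S Sᵀ]]. Then M is positive semidefinite if and only if Rᵀ R − Sᵀ S ≥ I_n in the Loewner order. -/
/-!
With the invertible lower-triangular `C = [[R, 0], [S, 1]]` one has `M = C Cᴴ - E₁₁`, where
`E₁₁ = [1; 0] [1, 0]`. Since `C u = [1; 0]` for `u = [R⁻¹; -S R⁻¹]`, this reads
`M = C (1 - u uᴴ) Cᴴ`, so `M ≥ 0` iff `u uᴴ ≤ 1` iff `uᴴ u ≤ 1` (both are Schur complements of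
`[[1, u], [uᴴ, 1]]`). Finally `1 - uᴴ u = R⁻ᴴ (Rᴴ R - Sᴴ S - 1) R⁻¹`.
-/

open Matrix

namespace Matrix

variable {m n α : Type*} [Fintype m] [Fintype n] [DecidableEq n]

section PosSemidef

variable [DecidableEq m] [CommRing α] [PartialOrder α] [StarRing α] [StarOrderedRing α]
  [NoZeroDivisors α]

attribute [local instance] invertibleOne

theorem posSemidef_one_sub_mul_conjTranspose_iff (u : Matrix m n α) :
    (1 - u * uᴴ).PosSemidef ↔ (1 - uᴴ * u).PosSemidef := by
  have h₁₁ := PosDef.fromBlocks₁₁ u 1 (PosDef.one (n := m) (R := α))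
  have h₂₂ := PosDef.fromBlocks₂₂ 1 u (PosDef.one (n := n) (R := α))
  simp only [inv_one, Matrix.mul_one] at h₁₁ h₂₂
  exact h₂₂.symm.trans h₁₁

end PosSemidef

section Factorization

variable [CommRing α] [StarRing α] {R : Matrix n n α} (S : Matrix m n α)

theorem fromBlocks_eq_mul_one_sub_mul_conjTranspose_mul [DecidableEq m] (hR : IsUnit R.det) :
    fromBlocks (-1 + R * Rᴴ) (R * Sᴴ) (S * Rᴴ) (1 + S * Sᴴ) =
      fromBlocks R (0 : Matrix n m α) S 1 *
        (1 - fromRows R⁻¹ (-(S * R⁻¹)) * (fromRows R⁻¹ (-(S * R⁻¹)))ᴴ) *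
        (fromBlocks R (0 : Matrix n m α) S 1)ᴴ := by
  have hu : fromBlocks R (0 : Matrix n m α) S 1 * fromRows R⁻¹ (-(S * R⁻¹)) =
      fromRows (1 : Matrix n n α) (0 : Matrix m n α) := by
    rw [fromBlocks_mul_fromRows, mul_nonsing_inv R hR]
    simp
  rw [Matrix.mul_sub, Matrix.sub_mul, Matrix.mul_one, ← Matrix.mul_assoc, hu, Matrix.mul_assoc,
    ← conjTranspose_mul, hu, conjTranspose_fromRows_eq_fromCols_conjTranspose,
    fromRows_mul_fromCols, fromBlocks_conjTranspose, fromBlocks_multiply, sub_eq_add_neg,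
    fromBlocks_neg, fromBlocks_add]
  simp only [conjTranspose_one, conjTranspose_zero, Matrix.mul_one, Matrix.mul_zero, add_zero]
  congr 1 <;> abel

theorem one_sub_conjTranspose_mul_fromRows_inv (hR : IsUnit R.det) :
    1 - (fromRows R⁻¹ (-(S * R⁻¹)))ᴴ * fromRows R⁻¹ (-(S * R⁻¹)) =
      R⁻¹ᴴ * (Rᴴ * R - Sᴴ * S - 1) * R⁻¹ := by
  have hRinvR : R⁻¹ᴴ * Rᴴ = 1 := by
    rw [← conjTranspose_mul, mul_nonsing_inv _ hR, conjTranspose_one]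
  rw [conjTranspose_fromRows_eq_fromCols_conjTranspose, fromCols_mul_fromRows, conjTranspose_neg,
    conjTranspose_mul, Matrix.neg_mul, Matrix.mul_neg, neg_neg, Matrix.mul_sub, Matrix.mul_sub,
    Matrix.sub_mul, Matrix.sub_mul, ← Matrix.mul_assoc R⁻¹ᴴ Rᴴ R, hRinvR, Matrix.one_mul,
    mul_nonsing_inv _ hR, Matrix.mul_one]
  simp only [Matrix.mul_assoc]
  abel

end Factorization

end Matrix

theorem stmt12 {r n : ℕ} (R : Matrix (Fin n) (Fin n) ℝ) (hR : IsUnit R.det)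
    (S : Matrix (Fin r) (Fin n) ℝ) :
    (Matrix.fromBlocks (-(1 : Matrix (Fin n) (Fin n) ℝ) + R * Rᵀ) (R * Sᵀ)
        (S * Rᵀ) ((1 : Matrix (Fin r) (Fin r) ℝ) + S * Sᵀ)).PosSemidef ↔
      (Rᵀ * R - Sᵀ * S - (1 : Matrix (Fin n) (Fin n) ℝ)).PosSemidef := by
  have hRu : IsUnit R := (isUnit_iff_isUnit_det R).mpr hR
  have hC : IsUnit (fromBlocks R (0 : Matrix (Fin n) (Fin r) ℝ) S 1) :=
    isUnit_fromBlocks_zero₁₂.mpr ⟨hRu, isUnit_one⟩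
  simp only [← conjTranspose_eq_transpose_of_trivial]
  rw [fromBlocks_eq_mul_one_sub_mul_conjTranspose_mul S hR, ← star_eq_conjTranspose,
    hC.posSemidef_star_right_conjugate_iff, posSemidef_one_sub_mul_conjTranspose_iff,
    one_sub_conjTranspose_mul_fromRows_inv S hR, ← star_eq_conjTranspose,
    (isUnit_nonsing_inv_iff.mpr hRu).posSemidef_star_left_conjugate_iff]
end

section
/- Let A, B be real symmetric d×d matrices with A positive semidefinite and A + B positive definite. If A (A+B)⁻¹ A ⪰ A in the Loewner order, then the number of positive eigenvalues of B is at most the dimension of the kernel of A. -/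
/-!
Put `M = A + B`. For `z = M⁻¹ A y` we have `M z = A y`, and the hypothesis `A M⁻¹ A ⪰ A` reads
`yᵀ A z ≥ yᵀ A y`; combined with `(y - z)ᵀ A (y - z) ≥ 0` this gives
`zᵀ B z = zᵀ A y - zᵀ A z ≤ 0`. So `B` is negative semidefinite on `M⁻¹ (range A)`, a subspace of
dimension `rank A`, while it is positive definite on the span of its eigenvectors with positive
eigenvalues. The two subspaces meet only in `0`, hence `s⁺(B) + rank A ≤ d = rank A + dim ker A`.
-/

open Module Matrix Finset
open scoped InnerProductSpace

section EigenBasis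

variable {𝕜 E ι : Type*} [RCLike 𝕜] [NormedAddCommGroup E] [InnerProductSpace 𝕜 E] [Fintype ι]
  {T : E →ₗ[𝕜] E} {μ : ι → ℝ}

theorem OrthonormalBasis.re_inner_map_self_eq_sum (v : OrthonormalBasis ι 𝕜 E)
    (hT : ∀ i, T (v i) = (μ i : 𝕜) • v i) (x : E) :
    RCLike.re ⟪x, T x⟫_𝕜 = ∑ i, μ i * ‖⟪v i, x⟫_𝕜‖ ^ 2 := by
  have hTx : T x = ∑ i, (⟪v i, x⟫_𝕜 * μ i) • v i := by
    conv_lhs => rw [← v.sum_repr' x]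
    simp only [map_sum, map_smul, hT, smul_smul]
  rw [hTx, inner_sum, map_sum]
  refine Finset.sum_congr rfl fun i _ => ?_
  rw [inner_smul_right, ← inner_conj_symm x (v i), mul_right_comm, RCLike.mul_conj]
  norm_cast
  exact mul_comm _ _

theorem OrthonormalBasis.re_inner_map_self_pos (v : OrthonormalBasis ι 𝕜 E)
    (hT : ∀ i, T (v i) = (μ i : 𝕜) • v i) {x : E}
    (hx : x ∈ Submodule.span 𝕜 (Set.range fun i : {i // 0 < μ i} => v i)) (hx0 : x ≠ 0) :
    0 < RCLike.re ⟪x, T x⟫_𝕜 := by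
  have hcoeff : ∀ i, μ i ≤ 0 → ⟪v i, x⟫_𝕜 = 0 := by
    intro i hi
    refine Submodule.mem_orthogonal_singleton_iff_inner_right.mp (Submodule.span_le.mpr ?_ hx)
    rintro _ ⟨j, rfl⟩
    exact Submodule.mem_orthogonal_singleton_iff_inner_right.mpr
      (v.orthonormal.2 (ne_of_apply_ne μ (hi.trans_lt j.2).ne))
  obtain ⟨i, hi⟩ : ∃ i, ⟪v i, x⟫_𝕜 ≠ 0 := by
    by_contra! h
    exact hx0 (by rw [← v.sum_repr' x]; simp [h])
  rw [v.re_inner_map_self_eq_sum hT]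
  refine Finset.sum_pos' (fun j _ => ?_) ⟨i, Finset.mem_univ i, ?_⟩
  · rcases le_or_gt (μ j) 0 with hj | hj
    · simp [hcoeff j hj]
    · positivity
  · have : 0 < μ i := not_le.mp (mt (hcoeff i) hi)
    positivity

theorem OrthonormalBasis.card_pos_add_finrank_le (v : OrthonormalBasis ι 𝕜 E)
    (hT : ∀ i, T (v i) = (μ i : 𝕜) • v i) (S : Submodule 𝕜 E)
    (hS : ∀ x ∈ S, RCLike.re ⟪x, T x⟫_𝕜 ≤ 0) :
    #{i | 0 < μ i} + finrank 𝕜 S ≤ finrank 𝕜 E := by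
  have := Module.Finite.of_basis v.toBasis
  set P := Submodule.span 𝕜 (Set.range fun i : {i // 0 < μ i} => v i)
  have hP : finrank 𝕜 P = #{i | 0 < μ i} :=
    (finrank_span_eq_card (v.orthonormal.linearIndependent.comp _ Subtype.val_injective)).trans
      (Fintype.card_subtype _)
  have hPS : Disjoint P S := Submodule.disjoint_def.mpr fun x hxP hxS =>
    by_contra fun hx0 => (hS x hxS).not_gt (v.re_inner_map_self_pos hT hxP hx0)
  exact hP ▸ Submodule.finrank_add_finrank_le_of_disjoint hPS

end EigenBasis

theorem Matrix.IsHermitian.card_pos_eigenvalues_add_finrank_le {𝕜 n : Type*} [RCLike 𝕜]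
    [Fintype n] [DecidableEq n] {B : Matrix n n 𝕜} (hB : B.IsHermitian) (S : Submodule 𝕜 (n → 𝕜))
    (hS : ∀ x ∈ S, RCLike.re (star x ⬝ᵥ (B *ᵥ x)) ≤ 0) :
    #{i | 0 < hB.eigenvalues i} + finrank 𝕜 S ≤ Fintype.card n := by
  let e := (WithLp.linearEquiv 2 𝕜 (n → 𝕜)).symm
  have h := hB.eigenvectorBasis.card_pos_add_finrank_le (T := toEuclideanLin B)
    (μ := hB.eigenvalues) (fun i => by ext1; simp [hB.mulVec_eigenvectorBasis i])
    (S.map (e : (n → 𝕜) →ₗ[𝕜] EuclideanSpace 𝕜 n)) ?_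
  · rwa [LinearEquiv.finrank_map_eq, finrank_euclideanSpace] at h
  · rintro _ ⟨x, hx, rfl⟩
    simpa [e, EuclideanSpace.inner_eq_star_dotProduct, dotProduct_comm] using hS x hx

theorem Matrix.IsSymm.dotProduct_mulVec_comm {R n : Type*} [CommSemiring R] [Fintype n]
    {A : Matrix n n R} (hA : A.IsSymm) (x y : n → R) : x ⬝ᵥ (A *ᵥ y) = y ⬝ᵥ (A *ᵥ x) := by
  rw [dotProduct_mulVec, dotProduct_comm, ← mulVec_transpose, hA.eq]

theorem Matrix.PosSemidef.dotProduct_sub_mulVec_nonpos_of_mem_range {n : Type*} [Fintype n]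
    [DecidableEq n] {A M : Matrix n n ℝ} (hA : A.PosSemidef) (hM : IsUnit M.det)
    (h : (A * M⁻¹ * A - A).PosSemidef) {z : n → ℝ}
    (hz : z ∈ LinearMap.range (M⁻¹ * A).mulVecLin) : z ⬝ᵥ ((M - A) *ᵥ z) ≤ 0 := by
  obtain ⟨y, rfl⟩ := hz
  set z := (M⁻¹ * A).mulVecLin y
  have hMz : M *ᵥ z = A *ᵥ y := by
    simp [z, mulVec_mulVec, ← mul_assoc, mul_nonsing_inv M hM]
  have hyz : y ⬝ᵥ (A *ᵥ y) ≤ y ⬝ᵥ (A *ᵥ z) := by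
    have := h.dotProduct_mulVec_nonneg y
    simp only [star_trivial, sub_mulVec, dotProduct_sub, sub_nonneg] at this
    simpa [z, mulVec_mulVec, mul_assoc] using this
  have hdiff := hA.dotProduct_mulVec_nonneg (y - z)
  simp only [star_trivial, mulVec_sub, dotProduct_sub, sub_dotProduct] at hdiff
  have hcomm := (isHermitian_iff_isSymm.mp hA.isHermitian).dotProduct_mulVec_comm z y
  rw [sub_mulVec, dotProduct_sub, hMz]
  linarith

theorem stmt13 {d : ℕ} (A B : Matrix (Fin d) (Fin d) ℝ)
    (hA : A.PosSemidef) (hB : B.IsHermitian) (hAB : (A + B).PosDef)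
    (h : (A * (A + B)⁻¹ * A - A).PosSemidef) :
    (Finset.univ.filter fun i => 0 < hB.eigenvalues i).card ≤
      Module.finrank ℝ (LinearMap.ker A.mulVecLin) := by
  have hM : IsUnit (A + B).det := hAB.det_pos.ne'.isUnit
  have hcount := hB.card_pos_eigenvalues_add_finrank_le
    (LinearMap.range ((A + B)⁻¹ * A).mulVecLin) fun x hx => by
      simpa using hA.dotProduct_sub_mulVec_nonpos_of_mem_range hM h hx
  have hrank : finrank ℝ (LinearMap.range ((A + B)⁻¹ * A).mulVecLin) =
      finrank ℝ (LinearMap.range A.mulVecLin) :=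
    rank_mul_eq_right_of_isUnit_det _ _ (isUnit_nonsing_inv_det _ hM)
  have hrank_nullity := A.mulVecLin.finrank_range_add_finrank_ker
  rw [hrank] at hcount
  simp only [Fintype.card_fin, Module.finrank_fin_fun] at hcount hrank_nullity
  omega
end

section
/- Let m ≥ n ≥ 1, U an invertible n×n real matrix, and V a real (m−n)×n matrix. Let Ω = {x ∈ ℝᵐ : Uᵀ diag(e^{x_1},…,e^{x_n}) U − Vᵀ diag(e^{x_{n+1}},…,e^{x_m}) V is positive definite}. Then Ω is a convex subset of ℝᵐ. -/
/-!
Write `A(x) = Uᵀ diag(eˣ) U` and `B(y) = Vᵀ diag(eʸ) V`. The heart of the matter is a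
geometric-mean inequality: if `B(y₁) ≤ A(x₁)` and `B(y₂) ≤ A(x₂)` in the Loewner order, then
`B((y₁+y₂)/2) ≤ A((x₁+x₂)/2)`. The two hypotheses make the block matrix
`[[A(x₁), B(ȳ)], [B(ȳ), A(x₂)]]` positive semidefinite, where `(x̄, ȳ)` is the midpoint, so by
the Schur complement `B(ȳ) A(x₁)⁻¹ B(ȳ) ≤ A(x₂) = A(x̄) A(x₁)⁻¹ A(x̄)` (the diagonal factors
commute). After a congruence this reads `Y² ≤ S²`, and the square root is operator monotone.

Hence the closed set `{(x, y) | B(y) ≤ A(x)}` is midpoint convex, so convex. The strict condition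
`B(y) < A(x)` holds exactly when `B(y) ≤ A(x - c)` for some `c > 0` (shifting `x` by `c` rescales
`A(x)` by `eᶜ`), so `Ω` is that convex set plus an open ray.
-/

open Matrix Set

theorem Set.Icc_subset_of_isClosed_of_midpoint_mem {T : Set ℝ} (hT : IsClosed T) {a b : ℝ}
    (ha : a ∈ T) (hb : b ∈ T) (hmid : ∀ x ∈ T, ∀ y ∈ T, midpoint ℝ x y ∈ T) : Icc a b ⊆ T := by
  rintro t ⟨hat, htb⟩
  by_contra ht
  -- the midpoint of the points of `T` nearest to `t` on either side would lie strictly between them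
  obtain ⟨l, ⟨hlT, hal, hlt⟩, hl⟩ :=
    (isCompact_Icc.inter_left hT).exists_isGreatest ⟨a, ha, le_rfl, hat⟩
  obtain ⟨r, ⟨hrT, htr, hrb⟩, hr⟩ :=
    (isCompact_Icc.inter_left hT).exists_isLeast ⟨b, hb, htb, le_rfl⟩
  have hlt : l < t := hlt.lt_of_ne fun h => ht (h ▸ hlT)
  have htr : t < r := htr.lt_of_ne fun h => ht (h ▸ hrT)
  have hlr : l < r := hlt.trans htr
  have hm := hmid l hlT r hrT
  rcases le_total (midpoint ℝ l r) t with hmt | hmt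
  · have := hl ⟨hm, hal.trans (left_le_midpoint.mpr hlr.le), hmt⟩
    exact (midpoint_le_left.mp this).not_gt hlr
  · have := hr ⟨hm, hmt, (midpoint_le_right.mpr hlr.le).trans hrb⟩
    exact (right_le_midpoint.mp this).not_gt hlr

theorem IsClosed.convex_of_midpoint_mem {E : Type*} [AddCommGroup E] [Module ℝ E]
    [TopologicalSpace E] [IsTopologicalAddGroup E] [ContinuousSMul ℝ E] {s : Set E}
    (hs : IsClosed s) (hmid : ∀ x ∈ s, ∀ y ∈ s, midpoint ℝ x y ∈ s) : Convex ℝ s := by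
  refine convex_iff_segment_subset.mpr fun x hx y hy => ?_
  rw [segment_eq_image_lineMap]
  rintro _ ⟨t, ht, rfl⟩
  refine Icc_subset_of_isClosed_of_midpoint_mem (T := AffineMap.lineMap x y ⁻¹' s)
    (hs.preimage AffineMap.lineMap_continuous) (by simpa using hx) (by simpa using hy) ?_ ht
  intro a ha b hb
  simpa [AffineMap.map_midpoint] using hmid _ ha _ hb

section Loewner

variable {ι : Type*} [Fintype ι]

theorem Matrix.isClosed_setOf_posSemidef : IsClosed {M : Matrix ι ι ℝ | M.PosSemidef} := by
  simp only [posSemidef_iff_dotProduct_mulVec, ofPred_and, ofPred_forall]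
  refine .inter (isClosed_eq continuous_id.matrix_conjTranspose continuous_id) ?_
  exact isClosed_iInter fun v => isClosed_le continuous_const (by fun_prop)

variable [DecidableEq ι]

theorem Matrix.PosSemidef.sub_of_mul_self_sub_mul_self {S Y : Matrix ι ι ℝ} (hS : S.PosSemidef)
    (hY : Y.PosSemidef) (h : (S * S - Y * Y).PosSemidef) : (S - Y).PosSemidef := by
  have hH : (S - Y).IsHermitian := hS.1.sub hY.1
  refine hH.posSemidef_iff_eigenvalues_nonneg.mpr fun i => ?_
  set μ := hH.eigenvalues i
  set v := ⇑(hH.eigenvectorBasis i)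
  change 0 ≤ μ
  have hv : (S - Y) *ᵥ v = μ • v := hH.mulVec_eigenvectorBasis i
  have hμ : μ = v ⬝ᵥ (S *ᵥ v) - v ⬝ᵥ (Y *ᵥ v) := by
    simpa [sub_mulVec] using hH.eigenvalues_eq i
  have hsq : v ⬝ᵥ ((S * S - Y * Y) *ᵥ v) = μ * (v ⬝ᵥ (S *ᵥ v) + v ⬝ᵥ (Y *ᵥ v)) := by
    have hSY : v ⬝ᵥ (((S - Y) * Y) *ᵥ v) = μ * (v ⬝ᵥ (Y *ᵥ v)) := by
      rw [← mulVec_mulVec, dotProduct_mulVec, ← hH.eq, conjTranspose_eq_transpose_of_trivial,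
        vecMul_transpose, hv, smul_dotProduct, smul_eq_mul]
    rw [show S * S - Y * Y = S * (S - Y) + (S - Y) * Y by noncomm_ring, add_mulVec,
      dotProduct_add, hSY, ← mulVec_mulVec, hv, mulVec_smul, dotProduct_smul, smul_eq_mul, mul_add]
  have h₀ := h.dotProduct_mulVec_nonneg v
  have hS₀ := hS.dotProduct_mulVec_nonneg v
  have hY₀ := hY.dotProduct_mulVec_nonneg v
  simp only [star_trivial] at h₀ hS₀ hY₀
  -- `μ < 0` would force both forms in `hsq` to vanish, and then `μ = 0` by `hμ`
  nlinarith

theorem Matrix.PosSemidef.sub_of_mul_inv_mul_sub {W G X : Matrix ι ι ℝ} (hW : IsUnit W.det)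
    (hG : G.PosSemidef) (hX : X.PosSemidef)
    (h : (G * (Wᴴ * W)⁻¹ * G - X * (Wᴴ * W)⁻¹ * X).PosSemidef) : (G - X).PosSemidef := by
  set T := W⁻¹
  have hT : IsUnit T := (isUnit_iff_isUnit_det _).mpr (isUnit_nonsing_inv_det W hW)
  have hTT : (Wᴴ * W)⁻¹ = T * Tᴴ := by
    rw [Matrix.mul_inv_rev, conjTranspose_nonsing_inv]
  rw [← hT.posSemidef_star_left_conjugate_iff, star_eq_conjTranspose, Matrix.mul_sub,
    Matrix.sub_mul]
  refine (hG.conjTranspose_mul_mul_same T).sub_of_mul_self_sub_mul_self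
    (hX.conjTranspose_mul_mul_same T) ?_
  have := hT.posSemidef_star_left_conjugate_iff.mpr h
  rw [hTT, star_eq_conjTranspose] at this
  convert this using 1
  simp only [Matrix.mul_sub, Matrix.sub_mul, Matrix.mul_assoc]

open scoped MatrixOrder in
theorem Matrix.PosDef.posDef_sub_iff_exists_smul_sub {A B : Matrix ι ι ℝ} (hA : A.PosDef) :
    (A - B).PosDef ↔ ∃ t ∈ Ioo (0 : ℝ) 1, (t • A - B).PosSemidef := by
  constructor
  · intro hAB
    rcases isEmpty_or_nonempty ι with hι | hι
    · exact ⟨1 / 2, by norm_num,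
        by simpa [Subsingleton.elim _ (0 : Matrix ι ι ℝ)] using PosSemidef.zero⟩
    obtain ⟨r, hr, hrAB⟩ : ∃ r > 0, algebraMap ℝ _ r ≤ A - B :=
      (CFC.exists_pos_algebraMap_le_iff hAB.1.isSelfAdjoint).2 fun _ hx =>
        (isStrictlyPositive_iff_posDef.mpr hAB).spectrum_pos hx
    obtain ⟨c, hc⟩ : BddAbove (spectrum ℝ A) := by
      rw [hA.1.spectrum_real_eq_range_eigenvalues]
      exact (finite_range _).bddAbove
    set c' := max c (2 * r)
    have hc' : r < c' := by linarith [le_max_right c (2 * r)]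
    have hAc : A ≤ algebraMap ℝ _ c' :=
      le_algebraMap_of_spectrum_le (fun x hx => (hc hx).trans (le_max_left c (2 * r)))
        hA.1.isSelfAdjoint
    have hε : 0 < r / c' := div_pos hr (hr.trans hc')
    refine ⟨1 - r / c', ⟨by linarith [(div_lt_one (hr.trans hc')).mpr hc'], by linarith⟩, ?_⟩
    have hsplit : (1 - r / c') • A - B
        = (A - B - algebraMap ℝ _ r) + (r / c') • (algebraMap ℝ _ c' - A) := by
      rw [Algebra.algebraMap_eq_smul_one, Algebra.algebraMap_eq_smul_one, smul_sub, smul_smul,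
        div_mul_cancel₀ r (hr.trans hc').ne']
      module
    rw [hsplit]
    exact (le_iff.mp hrAB).add ((le_iff.mp hAc).smul hε.le)
  · rintro ⟨t, ⟨-, ht⟩, h⟩
    rw [show A - B = (1 - t) • A + (t • A - B) by module]
    exact (hA.smul (by linarith)).add_posSemidef h

end Loewner

section WeightedGram

noncomputable def weightedGram {ι κ : Type*} [Fintype κ] [DecidableEq κ] (B : Matrix κ ι ℝ)
    (w : κ → ℝ) : Matrix ι ι ℝ :=
  Bᴴ * diagonal w * B

variable {ι κ : Type*} [Fintype κ] [DecidableEq κ]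

lemma weightedGram_isHermitian (B : Matrix κ ι ℝ) (w : κ → ℝ) :
    (weightedGram B w).IsHermitian :=
  isHermitian_conjTranspose_mul_mul B (isHermitian_diagonal w)

lemma weightedGram_smul (B : Matrix κ ι ℝ) (c : ℝ) (w : κ → ℝ) :
    weightedGram B (c • w) = c • weightedGram B w := by
  simp [weightedGram, diagonal_smul]

lemma weightedGram_exp_add (B : Matrix κ ι ℝ) (x : κ → ℝ) (c : ℝ) :
    weightedGram B (fun j => Real.exp (x j + c))
      = Real.exp c • weightedGram B (fun j => Real.exp (x j)) := by
  rw [← weightedGram_smul]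
  congr 1
  funext j
  simp [Real.exp_add, mul_comm]

variable [Fintype ι]

lemma weightedGram_posSemidef (B : Matrix κ ι ℝ) {w : κ → ℝ} (hw : 0 ≤ w) :
    (weightedGram B w).PosSemidef :=
  (posSemidef_diagonal_iff.mpr hw).conjTranspose_mul_mul_same B

lemma dotProduct_weightedGram_mulVec (B : Matrix κ ι ℝ) (w : κ → ℝ) (v u : ι → ℝ) :
    v ⬝ᵥ (weightedGram B w *ᵥ u) = ∑ j, w j * (B *ᵥ v) j * (B *ᵥ u) j := by
  rw [weightedGram, ← mulVec_mulVec, ← mulVec_mulVec, conjTranspose_eq_transpose_of_trivial,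
    dotProduct_mulVec, vecMul_transpose]
  simp only [dotProduct, mulVec_diagonal]
  exact Finset.sum_congr rfl fun j _ => by ring

lemma posSemidef_fromBlocks_weightedGram {A₁ A₂ : Matrix ι ι ℝ} (V : Matrix κ ι ℝ)
    {a b : κ → ℝ} (h₁ : (A₁ - weightedGram V (a * a)).PosSemidef)
    (h₂ : (A₂ - weightedGram V (b * b)).PosSemidef) :
    (fromBlocks A₁ (weightedGram V (a * b)) (weightedGram V (a * b))ᴴ A₂).PosSemidef := by
  have hX := (weightedGram_isHermitian V (a * b)).eq
  refine .of_dotProduct_mulVec_nonneg ?_ fun u => ?_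
  · refine IsHermitian.fromBlocks ?_ rfl ?_
    · simpa using h₁.1.add (weightedGram_isHermitian V (a * a))
    · simpa using h₂.1.add (weightedGram_isHermitian V (b * b))
  obtain ⟨v, w, rfl⟩ : ∃ v w, u = Sum.elim v w := ⟨_, _, (Sum.elim_comp_inl_inr u).symm⟩
  rw [star_trivial, fromBlocks_mulVec, sumElim_dotProduct_sumElim, hX]
  simp only [Sum.elim_comp_inl, Sum.elim_comp_inr, dotProduct_add]
  have hv := h₁.dotProduct_mulVec_nonneg v
  have hw := h₂.dotProduct_mulVec_nonneg w
  rw [star_trivial, sub_mulVec, dotProduct_sub] at hv hw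
  have hsq : 0 ≤ v ⬝ᵥ (weightedGram V (a * a) *ᵥ v) + v ⬝ᵥ (weightedGram V (a * b) *ᵥ w)
      + w ⬝ᵥ (weightedGram V (a * b) *ᵥ v) + w ⬝ᵥ (weightedGram V (b * b) *ᵥ w) := by
    simp only [dotProduct_weightedGram_mulVec, ← Finset.sum_add_distrib, Pi.mul_apply]
    exact Finset.sum_nonneg fun j _ => by
      nlinarith [sq_nonneg (a j * (V *ᵥ v) j + b j * (V *ᵥ w) j)]
  linarith

end WeightedGram

section GeometricMean

variable {ι : Type*} [Fintype ι] [DecidableEq ι]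

lemma weightedGram_posDef {B : Matrix ι ι ℝ} (hB : IsUnit B.det) {w : ι → ℝ}
    (hw : ∀ i, 0 < w i) : (weightedGram B w).PosDef :=
  ((isUnit_iff_isUnit_det B).mpr hB).posDef_star_left_conjugate_iff.mpr (posDef_diagonal_iff.mpr hw)

lemma weightedGram_mul (B : Matrix ι ι ℝ) (α β : ι → ℝ) :
    weightedGram B (α * β) = (diagonal α * B)ᴴ * (diagonal β * B) := by
  change Bᴴ * diagonal (fun i => α i * β i) * B = _
  rw [← diagonal_mul_diagonal', conjTranspose_mul, diagonal_conjTranspose, star_trivial]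
  simp only [Matrix.mul_assoc]

lemma isUnit_det_diagonal_mul {B : Matrix ι ι ℝ} (hB : IsUnit B.det) {α : ι → ℝ}
    (hα : ∀ i, α i ≠ 0) : IsUnit (diagonal α * B).det := by
  simpa [det_mul, det_diagonal, Finset.prod_ne_zero_iff, hα] using hB

lemma weightedGram_mul_inv_mul {B : Matrix ι ι ℝ} (hB : IsUnit B.det) {α : ι → ℝ}
    (hα : ∀ i, α i ≠ 0) (β : ι → ℝ) :
    weightedGram B (α * β) * (weightedGram B (α * α))⁻¹ * weightedGram B (α * β)
      = weightedGram B (β * β) := by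
  set W := diagonal α * B
  have hW : IsUnit W.det := isUnit_det_diagonal_mul hB hα
  have hWH : IsUnit Wᴴ.det := by simpa [det_conjTranspose] using hW
  calc _ = (diagonal β * B)ᴴ * W * (W⁻¹ * Wᴴ⁻¹) * (Wᴴ * (diagonal β * B)) := by
        rw [weightedGram_mul B α α, Matrix.mul_inv_rev]
        nth_rewrite 1 [mul_comm α β]
        rw [weightedGram_mul, weightedGram_mul]
    _ = (diagonal β * B)ᴴ * (diagonal β * B) := by
        simp only [Matrix.mul_assoc, mul_nonsing_inv_cancel_left _ _ hW,
          nonsing_inv_mul_cancel_left _ _ hWH]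
    _ = _ := (weightedGram_mul B β β).symm

variable {κ : Type*} [Fintype κ] [DecidableEq κ]

theorem posSemidef_weightedGram_mul_sub_weightedGram_mul {U : Matrix ι ι ℝ} (hU : IsUnit U.det)
    (V : Matrix κ ι ℝ) {α β : ι → ℝ} (hα : ∀ i, 0 < α i) (hβ : ∀ i, 0 < β i) {a b : κ → ℝ}
    (hab : 0 ≤ a * b) (h₁ : (weightedGram U (α * α) - weightedGram V (a * a)).PosSemidef)
    (h₂ : (weightedGram U (β * β) - weightedGram V (b * b)).PosSemidef) :
    (weightedGram U (α * β) - weightedGram V (a * b)).PosSemidef := by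
  have hα₀ i : α i ≠ 0 := (hα i).ne'
  have hA : (weightedGram U (α * α)).PosDef :=
    weightedGram_posDef hU fun i => mul_pos (hα i) (hα i)
  have hG := weightedGram_posSemidef U fun i => (mul_pos (hα i) (hβ i)).le
  have := hA.isUnit.invertible
  have hschur := (hA.fromBlocks₁₁ _ _).mp (posSemidef_fromBlocks_weightedGram V h₁ h₂)
  rw [(weightedGram_isHermitian V _).eq, ← weightedGram_mul_inv_mul hU hα₀ β,
    weightedGram_mul U α α] at hschur
  exact hG.sub_of_mul_inv_mul_sub (isUnit_det_diagonal_mul hU hα₀)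
    (weightedGram_posSemidef V hab) hschur

end GeometricMean

section Convexity

variable {ι κ : Type*} [Fintype ι] [DecidableEq ι] [Fintype κ] [DecidableEq κ]

open Real
open scoped Pointwise

noncomputable def expGramDiff (U : Matrix ι ι ℝ) (V : Matrix κ ι ℝ) (p : (ι → ℝ) × (κ → ℝ)) :
    Matrix ι ι ℝ :=
  weightedGram U (fun i => exp (p.1 i)) - weightedGram V (fun j => exp (p.2 j))

lemma continuous_expGramDiff (U : Matrix ι ι ℝ) (V : Matrix κ ι ℝ) :
    Continuous (expGramDiff U V) := by
  unfold expGramDiff weightedGram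
  fun_prop

theorem posSemidef_expGramDiff_midpoint {U : Matrix ι ι ℝ} (hU : IsUnit U.det)
    (V : Matrix κ ι ℝ) {p q : (ι → ℝ) × (κ → ℝ)} (hp : (expGramDiff U V p).PosSemidef)
    (hq : (expGramDiff U V q).PosSemidef) : (expGramDiff U V (midpoint ℝ p q)).PosSemidef := by
  rw [expGramDiff] at hp hq ⊢
  have h := posSemidef_weightedGram_mul_sub_weightedGram_mul hU V (α := fun i => exp (p.1 i / 2))
    (β := fun i => exp (q.1 i / 2)) (a := fun j => exp (p.2 j / 2)) (b := fun j => exp (q.2 j / 2))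
    (fun _ => exp_pos _) (fun _ => exp_pos _) (fun _ => (mul_pos (exp_pos _) (exp_pos _)).le)
    ?_ ?_
  · convert h using 3 <;> funext i <;> simp [← exp_add, midpoint_eq_smul_add] <;> ring_nf
  · convert hp using 3 <;> funext i <;> simp [← exp_add]
  · convert hq using 3 <;> funext i <;> simp [← exp_add]

theorem convex_setOf_expGramDiff_posSemidef {U : Matrix ι ι ℝ} (hU : IsUnit U.det)
    (V : Matrix κ ι ℝ) : Convex ℝ {p | (expGramDiff U V p).PosSemidef} :=
  (isClosed_setOf_posSemidef.preimage (continuous_expGramDiff U V)).convex_of_midpoint_mem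
    fun _ hp _ hq => posSemidef_expGramDiff_midpoint hU V hp hq

theorem setOf_expGramDiff_posDef_eq {U : Matrix ι ι ℝ} (hU : IsUnit U.det) (V : Matrix κ ι ℝ) :
    {p | (expGramDiff U V p).PosDef} = {p | (expGramDiff U V p).PosSemidef}
      + (fun c : ℝ => c • ((1 : ι → ℝ), (0 : κ → ℝ))) '' Ioi 0 := by
  ext p
  simp only [mem_ofPred_eq, Set.mem_add, mem_image, mem_Ioi]
  rw [expGramDiff, (weightedGram_posDef hU fun i => exp_pos (p.1 i)).posDef_sub_iff_exists_smul_sub]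
  constructor
  · rintro ⟨t, ⟨ht₀, ht₁⟩, h⟩
    refine ⟨p - (-log t) • (1, 0), ?_, _, ⟨-log t, neg_pos.mpr (log_neg ht₀ ht₁), rfl⟩,
      sub_add_cancel _ _⟩
    convert h using 2
    simp [expGramDiff, weightedGram_exp_add, exp_log ht₀]
  · rintro ⟨q, hq, _, ⟨c, hc, rfl⟩, rfl⟩
    refine ⟨exp (-c), ⟨exp_pos _, exp_lt_one_iff.mpr (neg_neg_of_pos hc)⟩, ?_⟩
    convert hq using 2
    simp [expGramDiff, weightedGram_exp_add, smul_smul, ← exp_add]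

end Convexity

theorem stmt14_general {m n : ℕ}
    (U : Matrix (Fin n) (Fin n) ℝ) (hU : IsUnit U.det)
    (V : Matrix (Fin (m - n)) (Fin n) ℝ) :
    Convex ℝ {p : (Fin n → ℝ) × (Fin (m - n) → ℝ) |
      (Uᵀ * Matrix.diagonal (fun i => Real.exp (p.1 i)) * U -
        Vᵀ * Matrix.diagonal (fun j => Real.exp (p.2 j)) * V).PosDef} := by
  rw [← conjTranspose_eq_transpose_of_trivial U, ← conjTranspose_eq_transpose_of_trivial V]
  change Convex ℝ {p | (expGramDiff U V p).PosDef}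
  rw [setOf_expGramDiff_posDef_eq hU V]
  exact (convex_setOf_expGramDiff_posSemidef hU V).add
    ((convex_Ioi 0).linear_image (LinearMap.toSpanSingleton ℝ _ (1, 0)))

theorem stmt14 {m n : ℕ} (hn : 1 ≤ n) (hm : n ≤ m)
    (U : Matrix (Fin n) (Fin n) ℝ) (hU : IsUnit U.det)
    (V : Matrix (Fin (m - n)) (Fin n) ℝ) :
    Convex ℝ {p : (Fin n → ℝ) × (Fin (m - n) → ℝ) |
      (Uᵀ * Matrix.diagonal (fun i => Real.exp (p.1 i)) * U -
        Vᵀ * Matrix.diagonal (fun j => Real.exp (p.2 j)) * V).PosDef} :=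
  stmt14_general U hU V
end

section
/- Let I and J be disjoint finite sets, E ⊆ I × J, and let (α_i)_{i∈I}, (β_j)_{j∈J} be non-negative reals. There exist non-negative numbers (γ_{ij})_{(i,j)∈E} with ∑_{j:(i,j)∈E} γ_{ij} = α_i for all i ∈ I and ∑_{i:(i,j)∈E} γ_{ij} = β_j for all j ∈ J, if and only if ∑_{i∈I} α_i = ∑_{j∈J} β_j and for every S ⊆ I, ∑_{i∈S} α_i ≤ ∑_{j : ∃ i∈S, (i,j)∈E} β_j. -/
/-!
Necessity: mass sent out of `S` arrives in the neighbourhood of `S`. Sufficiency is a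
Halmos–Vaughan style induction on the number of nonzero supplies and demands, for the relaxed
problem in which column sums are only bounded by `β`. If some set `S` that meets the support
of `α` but does not contain it satisfies Hall's inequality with equality, the problem splits
into `(S, N(S))` and its complement, both with smaller support. Otherwise pick an edge
`(i₀, j₀)` with `α i₀, β j₀ > 0` and move the largest amount `ε` along it that keeps Hall's
condition: then `α i₀` or `β j₀` becomes zero, or a new tight set appears and we split.
-/

open Finset
open scoped Classical

section Support

variable {ι M : Type*} [AddGroup M]

theorem support_sub_single_subset {f : ι → M} {i : ι} (hi : f i ≠ 0) (c : M) :
    (f - Pi.single i c).support ⊆ f.support := by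
  intro k hk
  by_cases hki : k = i
  · exact hki ▸ hi
  · simpa [hki] using hk

theorem support_sub_single_self_ssubset {f : ι → M} {i : ι} (hi : f i ≠ 0) :
    (f - Pi.single i (f i)).support ⊂ f.support :=
  (Set.ssubset_iff_of_subset (support_sub_single_subset hi _)).2 ⟨i, hi, by simp⟩

theorem sub_single_nonneg {N : Type*} [AddCommGroup N] [PartialOrder N] [IsOrderedAddMonoid N]
    {f : ι → N} (hf : 0 ≤ f) {i : ι} {c : N} (hc : c ≤ f i) :
    0 ≤ f - Pi.single i c := by
  intro k
  rcases eq_or_ne k i with rfl | hk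
  · simpa using hc
  · simpa [hk] using hf k

end Support

namespace Transport

variable {I J : Type*} (E : Set (I × J))

noncomputable def nbhd [Fintype J] (S : Finset I) : Finset J :=
  univ.filter fun j => ∃ i ∈ S, (i, j) ∈ E

section Nbhd

variable [Fintype J] {E}

theorem mem_nbhd {S : Finset I} {j : J} : j ∈ nbhd E S ↔ ∃ i ∈ S, (i, j) ∈ E := by
  simp [nbhd]

theorem nbhd_mono {S T : Finset I} (h : S ⊆ T) : nbhd E S ⊆ nbhd E T :=
  fun _ hj => have ⟨i, hi, hij⟩ := mem_nbhd.1 hj; mem_nbhd.2 ⟨i, h hi, hij⟩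

theorem nbhd_union (S T : Finset I) : nbhd E (S ∪ T) = nbhd E S ∪ nbhd E T := by
  ext j
  simp only [mem_union, mem_nbhd, exists_or, or_and_right]

end Nbhd

section Hall

variable [Fintype J]

def HallCondition (α : I → ℝ) (β : J → ℝ) : Prop :=
  ∀ S : Finset I, ∑ i ∈ S, α i ≤ ∑ j ∈ nbhd E S, β j

noncomputable def surplus (α : I → ℝ) (β : J → ℝ) (S : Finset I) : ℝ :=
  ∑ j ∈ nbhd E S, β j - ∑ i ∈ S, α i

variable {E} {α : I → ℝ} {β : J → ℝ}

namespace HallCondition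

theorem indicator (hβ : 0 ≤ β) (hH : HallCondition E α β) (S : Finset I) :
    HallCondition E ((S : Set I).indicator α) ((nbhd E S : Set J).indicator β) := by
  intro T
  rw [sum_indicator_eq_sum_inter, sum_indicator_eq_sum_inter]
  calc ∑ i ∈ T ∩ S, α i ≤ ∑ j ∈ nbhd E (T ∩ S), β j := hH _
    _ ≤ ∑ j ∈ nbhd E T ∩ nbhd E S, β j :=
      sum_le_sum_of_subset_of_nonneg
        (subset_inter (nbhd_mono inter_subset_left) (nbhd_mono inter_subset_right))
        fun j _ _ => hβ j

theorem indicator_compl [Fintype I] (hH : HallCondition E α β) {S : Finset I}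
    (htight : surplus E α β S = 0) :
    HallCondition E ((S : Set I)ᶜ.indicator α) ((nbhd E S : Set J)ᶜ.indicator β) := by
  rw [surplus, sub_eq_zero] at htight
  intro T
  rw [← coe_compl, ← coe_compl, sum_indicator_eq_sum_inter, sum_indicator_eq_sum_inter,
    ← sdiff_eq_inter_compl, ← sdiff_eq_inter_compl]
  calc ∑ i ∈ T \ S, α i = ∑ i ∈ S ∪ T, α i - ∑ i ∈ S, α i := by
        rw [← union_sdiff_left, sum_sdiff_eq_sub subset_union_left]
    _ ≤ ∑ j ∈ nbhd E (S ∪ T), β j - ∑ j ∈ nbhd E S, β j := by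
        linarith [hH (S ∪ T)]
    _ = ∑ j ∈ nbhd E T \ nbhd E S, β j := by
        rw [nbhd_union, ← sum_sdiff_eq_sub subset_union_left, union_sdiff_left]

theorem sub_single (hH : HallCondition E α β) {i₀ : I} {j₀ : J} {ε : ℝ} (hE : (i₀, j₀) ∈ E)
    (hε : ∀ S : Finset I, i₀ ∉ S → j₀ ∈ nbhd E S → ε ≤ surplus E α β S) :
    HallCondition E (α - Pi.single i₀ ε) (β - Pi.single j₀ ε) := by
  intro S
  have hS := hH S
  simp only [Pi.sub_apply, sum_sub_distrib, sum_pi_single']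
  by_cases hi : i₀ ∈ S
  · have hj : j₀ ∈ nbhd E S := mem_nbhd.2 ⟨i₀, hi, hE⟩
    simp only [hi, hj, if_true]
    linarith
  · by_cases hj : j₀ ∈ nbhd E S
    · simp only [hi, hj, if_true, if_false]
      have hεS := hε S hi hj
      rw [surplus] at hεS
      linarith
    · simp only [hi, hj, if_false]
      linarith

theorem exists_edge_pos (hH : HallCondition E α β) {i₀ : I} (hi₀ : 0 < α i₀) :
    ∃ j₀, (i₀, j₀) ∈ E ∧ 0 < β j₀ := by
  have hlt : ∑ j ∈ nbhd E {i₀}, (0 : J → ℝ) j < ∑ j ∈ nbhd E {i₀}, β j := by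
    simpa using hi₀.trans_le (by simpa using hH {i₀})
  obtain ⟨j₀, hj₀, hβj₀⟩ := exists_lt_of_sum_lt hlt
  obtain ⟨i, hi, hij⟩ := mem_nbhd.1 hj₀
  exact ⟨j₀, mem_singleton.1 hi ▸ hij, hβj₀⟩

end HallCondition

theorem surplus_sub_single {i₀ : I} {j₀ : J} {ε : ℝ} {S : Finset I} (hi₀ : i₀ ∉ S)
    (hj₀ : j₀ ∈ nbhd E S) :
    surplus E (α - Pi.single i₀ ε) (β - Pi.single j₀ ε) S = surplus E α β S - ε := by
  simp only [surplus, Pi.sub_apply, sum_sub_distrib, sum_pi_single', hi₀, hj₀, if_true, if_false]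
  ring

theorem exists_ne_zero_of_surplus_eq_zero (hβ : 0 ≤ β) {S : Finset I} (hS : surplus E α β S = 0)
    {j : J} (hj : j ∈ nbhd E S) (hβj : 0 < β j) : ∃ i ∈ S, α i ≠ 0 := by
  rw [surplus, sub_eq_zero] at hS
  refine exists_ne_zero_of_sum_ne_zero (ne_of_gt ?_)
  calc 0 < β j := hβj
    _ ≤ ∑ j ∈ nbhd E S, β j := single_le_sum (fun j _ => hβ j) hj
    _ = ∑ i ∈ S, α i := hS

theorem surplus_pos (hβ : 0 ≤ β)
    (hsplit : ∀ S : Finset I, (∃ i ∈ S, α i ≠ 0) → (∃ i ∉ S, α i ≠ 0) → 0 < surplus E α β S)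
    {i₀ : I} {j₀ : J} (hi₀ : α i₀ ≠ 0) (hj₀ : 0 < β j₀) {S : Finset I} (hi₀S : i₀ ∉ S)
    (hj₀S : j₀ ∈ nbhd E S) : 0 < surplus E α β S := by
  by_cases hin : ∃ i ∈ S, α i ≠ 0
  · exact hsplit S hin ⟨i₀, hi₀S, hi₀⟩
  · push Not at hin
    rw [surplus, sum_eq_zero hin, sub_zero]
    exact hj₀.trans_le (single_le_sum (fun j _ => hβ j) hj₀S)

end Hall

section Plan

variable [Fintype I] [Fintype J]

structure IsSubTransport (α : I → ℝ) (β : J → ℝ) (γ : I → J → ℝ) : Prop where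
  nonneg : ∀ i j, 0 ≤ γ i j
  eq_zero_of_notMem : ∀ i j, (i, j) ∉ E → γ i j = 0
  sum_row : ∀ i, ∑ j, γ i j = α i
  sum_col_le : ∀ j, ∑ i, γ i j ≤ β j

variable {E} {α α₁ α₂ : I → ℝ} {β β₁ β₂ : J → ℝ} {γ γ₁ γ₂ : I → J → ℝ}

namespace IsSubTransport

theorem hallCondition (h : IsSubTransport E α β γ) : HallCondition E α β := by
  intro S
  calc ∑ i ∈ S, α i = ∑ i ∈ S, ∑ j ∈ nbhd E S, γ i j := by
        refine sum_congr rfl fun i hi => ?_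
        rw [← h.sum_row i]
        refine (sum_subset (subset_univ _) fun j _ hj => h.eq_zero_of_notMem i j ?_).symm
        exact fun hij => hj (mem_nbhd.2 ⟨i, hi, hij⟩)
    _ = ∑ j ∈ nbhd E S, ∑ i ∈ S, γ i j := sum_comm
    _ ≤ ∑ j ∈ nbhd E S, β j := sum_le_sum fun j _ =>
        (sum_le_sum_of_subset_of_nonneg (subset_univ S) fun i _ _ => h.nonneg i j).trans
          (h.sum_col_le j)

theorem sum_col (h : IsSubTransport E α β γ) (htot : ∑ i, α i = ∑ j, β j) (j : J) :
    ∑ i, γ i j = β j := by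
  refine (sum_eq_sum_iff_of_le fun j _ => h.sum_col_le j).1 ?_ j (mem_univ j)
  rw [sum_comm, ← htot]
  exact sum_congr rfl fun i _ => h.sum_row i

theorem add (h₁ : IsSubTransport E α₁ β₁ γ₁) (h₂ : IsSubTransport E α₂ β₂ γ₂) :
    IsSubTransport E (α₁ + α₂) (β₁ + β₂) (γ₁ + γ₂) where
  nonneg i j := add_nonneg (h₁.nonneg i j) (h₂.nonneg i j)
  eq_zero_of_notMem i j hij := by
    simp [h₁.eq_zero_of_notMem i j hij, h₂.eq_zero_of_notMem i j hij]
  sum_row i := by simp [sum_add_distrib, h₁.sum_row, h₂.sum_row]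
  sum_col_le j := by
    simpa [sum_add_distrib] using add_le_add (h₁.sum_col_le j) (h₂.sum_col_le j)

end IsSubTransport

theorem isSubTransport_zero (hβ : 0 ≤ β) : IsSubTransport E 0 β 0 where
  nonneg _ _ := le_rfl
  eq_zero_of_notMem _ _ _ := rfl
  sum_row _ := by simp
  sum_col_le j := by simpa using hβ j

theorem isSubTransport_single {i₀ : I} {j₀ : J} {ε : ℝ} (hE : (i₀, j₀) ∈ E) (hε : 0 ≤ ε) :
    IsSubTransport E (Pi.single i₀ ε) (Pi.single j₀ ε) (Pi.single i₀ (Pi.single j₀ ε)) where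
  nonneg i j := by
    rcases eq_or_ne i i₀ with rfl | hi
    · rcases eq_or_ne j j₀ with rfl | hj <;> simp [*]
    · simp [hi]
  eq_zero_of_notMem i j hij := by
    rcases eq_or_ne i i₀ with rfl | hi
    · rcases eq_or_ne j j₀ with rfl | hj
      · exact absurd hE hij
      · simp [hj]
    · simp [hi]
  sum_row i := by
    rcases eq_or_ne i i₀ with rfl | hi <;> simp [*]
  sum_col_le j := by
    rw [← Finset.sum_apply, sum_pi_single']
    simp


theorem exists_isSubTransport_of_sub_single {i₀ : I} {j₀ : J} {ε : ℝ} (hE : (i₀, j₀) ∈ E)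
    (hε : 0 ≤ ε) (h : ∃ γ, IsSubTransport E (α - Pi.single i₀ ε) (β - Pi.single j₀ ε) γ) :
    ∃ γ, IsSubTransport E α β γ :=
  have ⟨γ, hγ⟩ := h
  ⟨_, by simpa using hγ.add (isSubTransport_single hE hε)⟩

noncomputable def supportSize (α : I → ℝ) (β : J → ℝ) : ℕ :=
  α.support.ncard + β.support.ncard

theorem supportSize_indicator_lt {s : Set I} (t : Set J) (hs : ¬α.support ⊆ s) :
    supportSize (s.indicator α) (t.indicator β) < supportSize α β := by
  unfold supportSize
  rw [Set.support_indicator, Set.support_indicator]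
  have := Set.ncard_lt_ncard (Set.inter_ssubset_right_iff.2 hs)
  have := Set.ncard_le_ncard (Set.inter_subset_right (s := t) (t := β.support))
  omega

theorem supportSize_sub_single_le {i₀ : I} {j₀ : J} (hi : α i₀ ≠ 0) (hj : β j₀ ≠ 0) (ε : ℝ) :
    supportSize (α - Pi.single i₀ ε) (β - Pi.single j₀ ε) ≤ supportSize α β :=
  add_le_add (Set.ncard_le_ncard (support_sub_single_subset hi ε))
    (Set.ncard_le_ncard (support_sub_single_subset hj ε))

theorem supportSize_sub_single_lt {i₀ : I} {j₀ : J} (hi : α i₀ ≠ 0) (hj : β j₀ ≠ 0) {ε : ℝ}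
    (hε : ε = α i₀ ∨ ε = β j₀) :
    supportSize (α - Pi.single i₀ ε) (β - Pi.single j₀ ε) < supportSize α β := by
  rcases hε with rfl | rfl
  · exact add_lt_add_of_lt_of_le (Set.ncard_lt_ncard (support_sub_single_self_ssubset hi))
      (Set.ncard_le_ncard (support_sub_single_subset hj _))
  · exact add_lt_add_of_le_of_lt (Set.ncard_le_ncard (support_sub_single_subset hi _))
      (Set.ncard_lt_ncard (support_sub_single_self_ssubset hj))

variable (E) in
def SolvableBelow (n : ℕ) : Prop :=
  ∀ α β, supportSize α β < n → 0 ≤ α → 0 ≤ β → HallCondition E α β → ∃ γ, IsSubTransport E α β γ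

theorem SolvableBelow.mono {m n : ℕ} (h : SolvableBelow E n) (hmn : m ≤ n) : SolvableBelow E m :=
  fun α β hlt => h α β (hlt.trans_le hmn)

theorem exists_isSubTransport_of_tight (hα : 0 ≤ α) (hβ : 0 ≤ β) (hH : HallCondition E α β)
    (IH : SolvableBelow E (supportSize α β)) {S : Finset I} (htight : surplus E α β S = 0)
    (hin : ∃ i ∈ S, α i ≠ 0) (hout : ∃ i ∉ S, α i ≠ 0) : ∃ γ, IsSubTransport E α β γ := by
  have hαs (s : Set I) : 0 ≤ s.indicator α := Set.indicator_nonneg fun i _ => hα i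
  have hβt (t : Set J) : 0 ≤ t.indicator β := Set.indicator_nonneg fun j _ => hβ j
  obtain ⟨γ₁, h₁⟩ := IH _ _ (supportSize_indicator_lt _ fun h => by
    obtain ⟨i, hiS, hαi⟩ := hout; exact hiS (h hαi))
    (hαs _) (hβt _) (hH.indicator hβ S)
  obtain ⟨γ₂, h₂⟩ := IH _ _ (supportSize_indicator_lt _ fun h => by
    obtain ⟨i, hiS, hαi⟩ := hin; exact h hαi hiS)
    (hαs _) (hβt _) (hH.indicator_compl htight)
  exact ⟨γ₁ + γ₂, by simpa only [Set.indicator_self_add_compl] using h₁.add h₂⟩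

theorem exists_isSubTransport_of_surplus_pos (hα : 0 ≤ α) (hβ : 0 ≤ β)
    (hH : HallCondition E α β) (IH : SolvableBelow E (supportSize α β))
    (hsplit : ∀ S : Finset I, (∃ i ∈ S, α i ≠ 0) → (∃ i ∉ S, α i ≠ 0) → 0 < surplus E α β S)
    {i₀ : I} (hi₀ : α i₀ ≠ 0) : ∃ γ, IsSubTransport E α β γ := by
  obtain ⟨j₀, hE, hβj₀⟩ := hH.exists_edge_pos ((hα i₀).lt_of_ne' hi₀)
  -- `ε` is the largest amount that can be moved along `(i₀, j₀)` keeping `α, β ≥ 0` and Hall's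
  -- condition; every candidate is positive because no splitting set is tight.
  let 𝒮 := univ.filter fun S : Finset I => i₀ ∉ S ∧ j₀ ∈ nbhd E S
  obtain ⟨ε, hεF, hεmin⟩ := exists_min_image
    (insert (α i₀) (insert (β j₀) (𝒮.image (surplus E α β)))) id (insert_nonempty _ _)
  have hεα : ε ≤ α i₀ := hεmin _ (mem_insert_self _ _)
  have hεβ : ε ≤ β j₀ := hεmin _ (mem_insert_of_mem (mem_insert_self _ _))
  have hεS (S : Finset I) (hi₀S : i₀ ∉ S) (hj₀S : j₀ ∈ nbhd E S) : ε ≤ surplus E α β S :=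
    hεmin _ <| mem_insert_of_mem <| mem_insert_of_mem <|
      mem_image_of_mem _ (by simp [𝒮, hi₀S, hj₀S])
  simp only [mem_insert, mem_image, 𝒮, mem_filter, mem_univ, true_and] at hεF
  have hεpos : 0 < ε := by
    rcases hεF with rfl | rfl | ⟨S, ⟨hi₀S, hj₀S⟩, rfl⟩
    · exact (hα i₀).lt_of_ne' hi₀
    · exact hβj₀
    · exact surplus_pos hβ hsplit hi₀ hβj₀ hi₀S hj₀S
  refine exists_isSubTransport_of_sub_single hE hεpos.le ?_
  have hα' := sub_single_nonneg hα hεα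
  have hβ' := sub_single_nonneg hβ hεβ
  have hH' := hH.sub_single hE hεS
  by_cases hdrop : ε = α i₀ ∨ ε = β j₀
  · exact IH _ _ (supportSize_sub_single_lt hi₀ hβj₀.ne' hdrop) hα' hβ' hH'
  push Not at hdrop
  obtain ⟨S, ⟨hi₀S, hj₀S⟩, rfl⟩ := (hεF.resolve_left hdrop.1).resolve_left hdrop.2
  have htight := (surplus_sub_single (α := α) (β := β) hi₀S hj₀S).trans (sub_self _)
  refine exists_isSubTransport_of_tight hα' hβ' hH'
    (IH.mono (supportSize_sub_single_le hi₀ hβj₀.ne' _))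
    htight (exists_ne_zero_of_surplus_eq_zero hβ' htight hj₀S ?_) ⟨i₀, hi₀S, ?_⟩
  · simpa using (hεβ.lt_of_ne hdrop.2)
  · simpa [sub_eq_zero] using hdrop.1.symm

end Plan

theorem exists_isSubTransport_of_hallCondition [Fintype I] [Fintype J] {E : Set (I × J)}
    {α : I → ℝ} {β : J → ℝ} (hα : 0 ≤ α) (hβ : 0 ≤ β) (hH : HallCondition E α β) :
    ∃ γ, IsSubTransport E α β γ := by
  have IH : SolvableBelow E (supportSize α β) := fun _ _ _ hα' hβ' hH' =>
    exists_isSubTransport_of_hallCondition hα' hβ' hH'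
  by_cases hα0 : α = 0
  · exact ⟨0, hα0 ▸ isSubTransport_zero hβ⟩
  obtain ⟨i₀, hi₀⟩ := Function.ne_iff.1 hα0
  by_cases hsplit :
      ∀ S : Finset I, (∃ i ∈ S, α i ≠ 0) → (∃ i ∉ S, α i ≠ 0) → 0 < surplus E α β S
  · exact exists_isSubTransport_of_surplus_pos hα hβ hH IH hsplit hi₀
  · push Not at hsplit
    obtain ⟨S, hin, hout, hS⟩ := hsplit
    have htight : surplus E α β S = 0 := hS.antisymm (sub_nonneg.2 (hH S))
    exact exists_isSubTransport_of_tight hα hβ hH IH htight hin hout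
termination_by supportSize α β

end Transport

open scoped BigOperators Classical in
theorem stmt16 {I J : Type*} [Fintype I] [Fintype J]
    (E : Set (I × J)) (α : I → ℝ) (β : J → ℝ)
    (hα : ∀ i, 0 ≤ α i) (hβ : ∀ j, 0 ≤ β j) :
    (∃ γ : I → J → ℝ, (∀ i j, 0 ≤ γ i j) ∧ (∀ i j, (i, j) ∉ E → γ i j = 0) ∧
      (∀ i, ∑ j, γ i j = α i) ∧ (∀ j, ∑ i, γ i j = β j)) ↔
    ((∑ i, α i = ∑ j, β j) ∧ ∀ S : Finset I,
      ∑ i ∈ S, α i ≤ ∑ j ∈ Finset.univ.filter (fun j => ∃ i ∈ S, (i, j) ∈ E), β j) := by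
  constructor
  · rintro ⟨γ, hγ, hγE, hrow, hcol⟩
    refine ⟨?_, Transport.IsSubTransport.hallCondition ⟨hγ, hγE, hrow, fun j => (hcol j).le⟩⟩
    simp_rw [← hrow, ← hcol]
    exact Finset.sum_comm
  · rintro ⟨htot, hH⟩
    obtain ⟨γ, h⟩ := Transport.exists_isSubTransport_of_hallCondition hα hβ hH
    exact ⟨γ, h.nonneg, h.eq_zero_of_notMem, h.sum_row, h.sum_col htot⟩
end

section
/- Let λ ∈ ℝ with λ ∉ [0,1], and let f, g : ℝⁿ → [0,∞] be measurable with 0 < ∫ f < ∞ and 0 < ∫ g < ∞. Then ∫_{ℝⁿ} f(x)^λ g(x)^{1−λ} dx ≥ (∫ f)^λ (∫ g)^{1−λ}, with the convention 0·∞ = 0. -/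
/-!
For `p > 1` put `F = f ^ p * g ^ (1 - p)`. If `∫ F < ∞`, then almost everywhere `g` is finite and
`f` vanishes where `g` does, so `f = F ^ (1/p) * g ^ (1 - 1/p)` a.e.; the forward Hölder inequality
with the exponents `1/p, 1 - 1/p ∈ [0, 1]` gives `∫ f ≤ (∫ F) ^ (1/p) * (∫ g) ^ (1 - 1/p)`, and
raising to the power `p` yields the claim. The case `p < 0` is the case `1 - p > 1` with `f` and `g`
exchanged.
-/

open MeasureTheory

open scoped ENNReal

namespace ENNReal

theorem eq_rpow_mul_rpow_one_sub_rpow_inv_mul {p : ℝ} (hp : 1 < p) {a b : ℝ≥0∞} (hb : b ≠ ∞)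
    (hab : a ^ p * b ^ (1 - p) ≠ ∞) :
    a = (a ^ p * b ^ (1 - p)) ^ p⁻¹ * b ^ (1 - p⁻¹) := by
  have hp0 : 0 < p := by linarith
  rcases eq_or_ne b 0 with rfl | hb0
  · obtain rfl : a = 0 := by
      by_contra ha
      rw [zero_rpow_of_neg (sub_neg.2 hp),
        mul_top (rpow_pos_of_nonneg (pos_iff_ne_zero.2 ha) hp0.le).ne'] at hab
      exact hab rfl
    simp [zero_rpow_of_pos hp0, zero_rpow_of_pos (inv_pos.2 hp0)]
  rw [mul_rpow_of_nonneg _ _ (inv_nonneg.2 hp0.le), ← rpow_mul, ← rpow_mul,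
    mul_inv_cancel₀ hp0.ne', rpow_one, mul_assoc, ← rpow_add _ _ hb0 hb]
  field_simp
  simp

theorem rpow_mul_rpow_one_sub_le {p : ℝ} (hp : 0 < p) {a b c : ℝ≥0∞} (hc0 : c ≠ 0) (hc : c ≠ ∞)
    (h : a ≤ b ^ p⁻¹ * c ^ (1 - p⁻¹)) : a ^ p * c ^ (1 - p) ≤ b := by
  calc a ^ p * c ^ (1 - p) ≤ (b ^ p⁻¹ * c ^ (1 - p⁻¹)) ^ p * c ^ (1 - p) := by gcongr
    _ = b := by
      rw [mul_rpow_of_nonneg _ _ hp.le, ← rpow_mul, ← rpow_mul, inv_mul_cancel₀ hp.ne', rpow_one,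
        mul_assoc, ← rpow_add _ _ hc0 hc]
      field_simp
      simp

end ENNReal

namespace MeasureTheory

variable {α : Type*} [MeasurableSpace α] {μ : Measure α} {f g : α → ℝ≥0∞} {p : ℝ}

theorem le_lintegral_rpow_mul_rpow_one_sub_of_one_lt (hp : 1 < p) (hf : AEMeasurable f μ)
    (hg : AEMeasurable g μ) (hg0 : ∫⁻ x, g x ∂μ ≠ 0) (hg_top : ∫⁻ x, g x ∂μ ≠ ∞) :
    (∫⁻ x, f x ∂μ) ^ p * (∫⁻ x, g x ∂μ) ^ (1 - p) ≤ ∫⁻ x, f x ^ p * g x ^ (1 - p) ∂μ := by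
  set F := fun x ↦ f x ^ p * g x ^ (1 - p)
  have hF : AEMeasurable F μ := (hf.pow_const p).mul (hg.pow_const (1 - p))
  by_cases hF_top : ∫⁻ x, F x ∂μ = ∞
  · exact hF_top ▸ le_top
  have hp0 : 0 < p := by linarith
  refine ENNReal.rpow_mul_rpow_one_sub_le hp0 hg0 hg_top ?_
  calc ∫⁻ x, f x ∂μ = ∫⁻ x, F x ^ p⁻¹ * g x ^ (1 - p⁻¹) ∂μ := by
        refine lintegral_congr_ae ?_
        filter_upwards [ae_lt_top' hF hF_top, ae_lt_top' hg hg_top] with x hFx hgx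
        exact ENNReal.eq_rpow_mul_rpow_one_sub_rpow_inv_mul hp hgx.ne hFx.ne
    _ ≤ (∫⁻ x, F x ∂μ) ^ p⁻¹ * (∫⁻ x, g x ∂μ) ^ (1 - p⁻¹) :=
        ENNReal.lintegral_mul_norm_pow_le hF hg (inv_nonneg.2 hp0.le)
          (sub_nonneg.2 (inv_le_one_of_one_le₀ hp.le)) (add_sub_cancel _ _)

theorem le_lintegral_rpow_mul_rpow_one_sub_of_neg (hp : p < 0) (hf : AEMeasurable f μ)
    (hg : AEMeasurable g μ) (hf0 : ∫⁻ x, f x ∂μ ≠ 0) (hf_top : ∫⁻ x, f x ∂μ ≠ ∞) :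
    (∫⁻ x, f x ∂μ) ^ p * (∫⁻ x, g x ∂μ) ^ (1 - p) ≤ ∫⁻ x, f x ^ p * g x ^ (1 - p) ∂μ := by
  have h := le_lintegral_rpow_mul_rpow_one_sub_of_one_lt (by linarith : 1 < 1 - p) hg hf hf0 hf_top
  simp only [sub_sub_cancel] at h
  simpa only [mul_comm] using h

theorem le_lintegral_rpow_mul_rpow_one_sub (hp : p ∉ Set.Icc 0 1) (hf : AEMeasurable f μ)
    (hg : AEMeasurable g μ) (hf0 : ∫⁻ x, f x ∂μ ≠ 0) (hf_top : ∫⁻ x, f x ∂μ ≠ ∞)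
    (hg0 : ∫⁻ x, g x ∂μ ≠ 0) (hg_top : ∫⁻ x, g x ∂μ ≠ ∞) :
    (∫⁻ x, f x ∂μ) ^ p * (∫⁻ x, g x ∂μ) ^ (1 - p) ≤ ∫⁻ x, f x ^ p * g x ^ (1 - p) ∂μ := by
  rcases not_and_or.1 hp with hp | hp
  · exact le_lintegral_rpow_mul_rpow_one_sub_of_neg (not_le.1 hp) hf hg hf0 hf_top
  · exact le_lintegral_rpow_mul_rpow_one_sub_of_one_lt (not_le.1 hp) hf hg hg0 hg_top

end MeasureTheory

theorem stmt17 {n : ℕ} (lam : ℝ) (hlam : lam ∉ Set.Icc (0 : ℝ) 1)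
    (f g : (Fin n → ℝ) → ENNReal) (hf : Measurable f) (hg : Measurable g)
    (hf0 : 0 < ∫⁻ x, f x) (hf1 : ∫⁻ x, f x < ⊤)
    (hg0 : 0 < ∫⁻ x, g x) (hg1 : ∫⁻ x, g x < ⊤) :
    (∫⁻ x, f x) ^ lam * (∫⁻ x, g x) ^ (1 - lam) ≤
      ∫⁻ x, f x ^ lam * g x ^ (1 - lam) :=
  le_lintegral_rpow_mul_rpow_one_sub hlam hf.aemeasurable hg.aemeasurable hf0.ne' hf1.ne hg0.ne'
    hg1.ne
end

section
/- Let c_1 ≥ 0 ≥ c_2, …, c_m with c_1 + c_2 + ⋯ + c_m = 1. Then for all measurable functions f_k : ℝ^d → [0,∞] with ∫ f_k ∈ (0,∞) for each k, ∫_{ℝ^d} ∏_{k=1}^m f_k^{c_k} ≥ ∏_{k=1}^m (∫_{ℝ^d} f_k)^{c_k}. -/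
/-!
Let `i` be the index with `c i ≥ 0` (then in fact `c i ≥ 1`), write `s` for the remaining
indices and `g = ∏ₖ fₖ ^ cₖ`; the case `∫ g = ∞` is trivial. Almost everywhere
`fᵢ ^ cᵢ = g * ∏_{k ∈ s} fₖ ^ (-cₖ)`, so with `r = cᵢ⁻¹` the forward Hölder inequality for the
nonnegative exponents `r` and `-cₖ * r`, which sum to `1`, gives
`∫ fᵢ ≤ ((∫ g) * ∏_{k ∈ s} (∫ fₖ) ^ (-cₖ)) ^ r`. Raising to the power `cᵢ` and multiplying
by `∏_{k ∈ s} (∫ fₖ) ^ cₖ` gives the claim.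
-/

open MeasureTheory Finset
open scoped ENNReal

namespace ENNReal

lemma rpow_mul_rpow_neg {x : ℝ≥0∞} {y : ℝ} (hx : x ≠ 0 ∨ y = 0) (hx' : x ≠ ∞) :
    x ^ y * x ^ (-y) = 1 := by
  rcases hx with hx | rfl
  · rw [← rpow_add _ _ hx hx', add_neg_cancel, rpow_zero]
  · simp

lemma mul_prod_rpow_rpow {ι : Type*} (s : Finset ι) (y : ℝ≥0∞) (z : ι → ℝ≥0∞) (d : ι → ℝ)
    {r : ℝ} (hr : 0 ≤ r) :
    (y * ∏ k ∈ s, z k ^ d k) ^ r = y ^ r * ∏ k ∈ s, z k ^ (d k * r) := by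
  simp only [mul_rpow_of_nonneg _ _ hr, ← prod_rpow_of_nonneg hr, ← rpow_mul]

variable {ι : Type*} [Fintype ι] [DecidableEq ι] {c : ι → ℝ} {i : ι}

lemma rpow_eq_prod_rpow_mul_prod_erase_rpow_neg (a : ι → ℝ≥0∞) (hc : ∀ k ≠ i, c k ≤ 0)
    (ha : ∀ k ≠ i, a k ≠ ∞) (hg : ∏ k, a k ^ c k ≠ ∞) :
    a i ^ c i = (∏ k, a k ^ c k) * ∏ k ∈ univ.erase i, a k ^ (-c k) := by
  rw [← mul_prod_erase univ _ (mem_univ i), mul_assoc, ← prod_mul_distrib]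
  rcases eq_or_ne (a i ^ c i) 0 with hai | hai
  · simp [hai]
  have hfactor : ∀ j, a j ^ c j ≠ 0 := by
    intro j
    rcases eq_or_ne j i with rfl | hj
    · exact hai
    · simp [rpow_eq_zero_iff, ha j hj, not_lt.2 (hc j hj)]
  have hak : ∀ k ≠ i, a k ≠ 0 ∨ c k = 0 := by
    intro k hk
    by_contra! h
    refine hg (WithTop.prod_eq_top (mem_univ k) ?_ fun j _ => hfactor j)
    rw [h.1]
    exact zero_rpow_of_neg (lt_of_le_of_ne (hc k hk) h.2)
  rw [prod_eq_one fun k hk => rpow_mul_rpow_neg (hak k (ne_of_mem_erase hk)) (ha k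
    (ne_of_mem_erase hk)), mul_one]

end ENNReal

section ReverseHolder

variable {α ι : Type*} [MeasurableSpace α] {μ : Measure α} [Fintype ι] [DecidableEq ι]
  {c : ι → ℝ} {i : ι} {f : ι → α → ℝ≥0∞}

theorem ENNReal.lintegral_rpow_le_lintegral_prod_rpow_mul_prod_erase
    (hc : ∀ k ≠ i, c k ≤ 0) (hsum : ∑ k, c k = 1) (hf : ∀ k, AEMeasurable (f k) μ)
    (hf1 : ∀ k ≠ i, ∫⁻ x, f k x ∂μ ≠ ∞) (hg : ∫⁻ x, ∏ k, f k x ^ c k ∂μ ≠ ∞) :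
    (∫⁻ x, f i x ∂μ) ^ c i ≤
      (∫⁻ x, ∏ k, f k x ^ c k ∂μ) * ∏ k ∈ univ.erase i, (∫⁻ x, f k x ∂μ) ^ (-c k) := by
  set s := univ.erase i
  set g : α → ℝ≥0∞ := fun x => ∏ k, f k x ^ c k
  have hrest : ∑ k ∈ s, c k ≤ 0 := sum_nonpos fun k hk => hc k (ne_of_mem_erase hk)
  have hci : 0 < c i := by linarith [add_sum_erase _ c (mem_univ i)]
  have hr : 0 ≤ (c i)⁻¹ := inv_nonneg.2 hci.le
  have hexp : (c i)⁻¹ + ∑ k ∈ s, -c k * (c i)⁻¹ = 1 := by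
    rw [← sum_mul, sum_neg_distrib]
    field_simp
    linarith [add_sum_erase _ c (mem_univ i)]
  have hgm : AEMeasurable g μ := by
    simpa only [g, prod_fn] using aemeasurable_prod univ fun k _ => (hf k).pow_const (c k)
  have hpoint : ∀ᵐ x ∂μ, f i x = (g x * ∏ k ∈ s, f k x ^ (-c k)) ^ (c i)⁻¹ := by
    have hfin : ∀ᵐ x ∂μ, ∀ k ≠ i, f k x ≠ ∞ := ae_all_iff.2 fun k =>
      if hk : k = i then .of_forall fun _ h => absurd hk h
      else (ae_lt_top' (hf k) (hf1 k hk)).mono fun _ hx _ => hx.ne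
    filter_upwards [hfin, ae_lt_top' hgm hg] with x hx hgx
    rw [← rpow_eq_prod_rpow_mul_prod_erase_rpow_neg (fun k => f k x) hc hx hgx.ne,
      rpow_rpow_inv hci.ne']
  rw [← le_rpow_inv_iff hci]
  calc ∫⁻ x, f i x ∂μ
      = ∫⁻ x, g x ^ (c i)⁻¹ * ∏ k ∈ s, f k x ^ (-c k * (c i)⁻¹) ∂μ :=
        lintegral_congr_ae (hpoint.mono fun x hx => by rw [hx, mul_prod_rpow_rpow _ _ _ _ hr])
    _ ≤ (∫⁻ x, g x ∂μ) ^ (c i)⁻¹ * ∏ k ∈ s, (∫⁻ x, f k x ∂μ) ^ (-c k * (c i)⁻¹) :=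
        lintegral_mul_prod_norm_pow_le s hgm (fun k _ => hf k) _ hexp hr
          fun k hk => mul_nonneg (neg_nonneg.2 (hc k (ne_of_mem_erase hk))) hr
    _ = _ := (mul_prod_rpow_rpow _ _ _ _ hr).symm

theorem ENNReal.prod_lintegral_rpow_le_lintegral_prod_rpow
    (hc : ∀ k ≠ i, c k ≤ 0) (hsum : ∑ k, c k = 1) (hf : ∀ k, AEMeasurable (f k) μ)
    (hf0 : ∀ k ≠ i, ∫⁻ x, f k x ∂μ ≠ 0) (hf1 : ∀ k ≠ i, ∫⁻ x, f k x ∂μ ≠ ∞) :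
    ∏ k, (∫⁻ x, f k x ∂μ) ^ c k ≤ ∫⁻ x, ∏ k, f k x ^ c k ∂μ := by
  set s := univ.erase i
  set I : ι → ℝ≥0∞ := fun k => ∫⁻ x, f k x ∂μ
  rcases eq_or_ne (∫⁻ x, ∏ k, f k x ^ c k ∂μ) ∞ with hg | hg
  · exact hg ▸ le_top
  have hcancel : ∏ k ∈ s, I k ^ (-c k) * I k ^ c k = 1 :=
    prod_eq_one fun k hk => by
      simpa only [neg_neg] using rpow_mul_rpow_neg (y := -c k)
        (.inl (hf0 k (ne_of_mem_erase hk))) (hf1 k (ne_of_mem_erase hk))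
  calc ∏ k, I k ^ c k
      = I i ^ c i * ∏ k ∈ s, I k ^ c k := (mul_prod_erase _ _ (mem_univ i)).symm
    _ ≤ ((∫⁻ x, ∏ k, f k x ^ c k ∂μ) * ∏ k ∈ s, I k ^ (-c k)) * ∏ k ∈ s, I k ^ c k := by
      gcongr
      exact lintegral_rpow_le_lintegral_prod_rpow_mul_prod_erase hc hsum hf hf1 hg
    _ = ∫⁻ x, ∏ k, f k x ^ c k ∂μ := by rw [mul_assoc, ← prod_mul_distrib, hcancel, mul_one]

end ReverseHolder

theorem stmt18_general {m d : ℕ} (hm : 0 < m) (c : Fin m → ℝ)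
    (hck : ∀ k : Fin m, k ≠ ⟨0, hm⟩ → c k ≤ 0)
    (hsum : ∑ k, c k = 1)
    (f : Fin m → (Fin d → ℝ) → ENNReal) (hf : ∀ k, Measurable (f k))
    (hf0 : ∀ k, 0 < ∫⁻ x, f k x) (hf1 : ∀ k, ∫⁻ x, f k x < ⊤) :
    ∏ k, (∫⁻ x, f k x) ^ c k ≤ ∫⁻ x, ∏ k, f k x ^ c k :=
  ENNReal.prod_lintegral_rpow_le_lintegral_prod_rpow hck hsum (fun k => (hf k).aemeasurable)
    (fun k _ => (hf0 k).ne') (fun k _ => (hf1 k).ne)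

theorem stmt18 {m d : ℕ} (hm : 0 < m) (c : Fin m → ℝ)
    (hc1 : 0 ≤ c ⟨0, hm⟩) (hck : ∀ k : Fin m, k ≠ ⟨0, hm⟩ → c k ≤ 0)
    (hsum : ∑ k, c k = 1)
    (f : Fin m → (Fin d → ℝ) → ENNReal) (hf : ∀ k, Measurable (f k))
    (hf0 : ∀ k, 0 < ∫⁻ x, f k x) (hf1 : ∀ k, ∫⁻ x, f k x < ⊤) :
    ∏ k, (∫⁻ x, f k x) ^ c k ≤ ∫⁻ x, ∏ k, f k x ^ c k :=
  stmt18_general hm c hck hsum f hf hf0 hf1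
end
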